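/- arXiv:1702.02241 — 4 statements merged into one kernel-verified Lean document; each statement's English description precedes it below -/
import Mathlib

section
/- Let P, K ∈ ℝ^{n×k} be real matrices. Then P Pᵀ = K Kᵀ if and only if there exists an orthogonal matrix Q ∈ ℝ^{k×k} (i.e., Qᵀ Q = I) such that P = K Q. -/
open Matrix

section aux

variable {n k : ℕ}

private lemma inner_dot (x y : EuclideanSpace ℝ (Fin k)) :
    (inner ℝ x y : ℝ) = x ⬝ᵥ y := by
  rw [EuclideanSpace.inner_eq_star_dotProduct, star_trivial, dotProduct_comm]

private lemma dot_self_eq (A : Matrix (Fin n) (Fin k) ℝ) (c : Fin n → ℝ) :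
    (Aᵀ.mulVec c) ⬝ᵥ (Aᵀ.mulVec c) = ((A * Aᵀ).mulVec c) ⬝ᵥ c := by
  rw [Matrix.dotProduct_mulVec, Matrix.vecMul_transpose, Matrix.mulVec_mulVec]

end aux

/-- For real `n × k` matrices `P` and `K`, we have `P * Pᵀ = K * Kᵀ` if and only if
`P = K * Q` for some orthogonal `k × k` matrix `Q`. -/
theorem mul_transpose_self_eq_iff_exists_orthogonal (n k : ℕ)
    (P K : Matrix (Fin n) (Fin k) ℝ) :
    P * Pᵀ = K * Kᵀ ↔
      ∃ Q : Matrix (Fin k) (Fin k) ℝ, Qᵀ * Q = 1 ∧ Q * Qᵀ = 1 ∧ P = K * Q := by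
  constructor
  · intro h
    classical
    let V := EuclideanSpace ℝ (Fin k)
    let L : (Fin n → ℝ) →ₗ[ℝ] V := (WithLp.linearEquiv 2 ℝ (Fin k → ℝ)).symm.toLinearMap ∘ₗ Matrix.mulVecLin Kᵀ
    let M : (Fin n → ℝ) →ₗ[ℝ] V := (WithLp.linearEquiv 2 ℝ (Fin k → ℝ)).symm.toLinearMap ∘ₗ Matrix.mulVecLin Pᵀ
    have norm_eq : ∀ c : Fin n → ℝ, ‖M c‖ = ‖L c‖ := by
      intro c
      have h2 : (inner ℝ (M c) (M c) : ℝ) = inner ℝ (L c) (L c) := by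
        rw [inner_dot, inner_dot]
        show (Pᵀ.mulVec c) ⬝ᵥ (Pᵀ.mulVec c) = (Kᵀ.mulVec c) ⬝ᵥ (Kᵀ.mulVec c)
        rw [dot_self_eq, dot_self_eq, h]
      rw [real_inner_self_eq_norm_sq, real_inner_self_eq_norm_sq] at h2
      exact (sq_eq_sq₀ (norm_nonneg _) (norm_nonneg _)).mp h2
    have hker : LinearMap.ker L ≤ LinearMap.ker M := by
      intro c hc
      rw [LinearMap.mem_ker] at hc ⊢
      have := norm_eq c
      rw [hc, norm_zero, norm_eq_zero] at this
      exact this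
    let S := LinearMap.range L
    let ψ : ((Fin n → ℝ) ⧸ LinearMap.ker L) →ₗ[ℝ] V := (LinearMap.ker L).liftQ M hker
    let φ : S →ₗ[ℝ] V := ψ ∘ₗ (L.quotKerEquivRange.symm : S →ₗ[ℝ] _)
    have φ_apply : ∀ (c : Fin n → ℝ) (hc : L c ∈ S), φ ⟨L c, hc⟩ = M c := by
      intro c hc
      show ψ (L.quotKerEquivRange.symm ⟨L c, hc⟩) = M c
      rw [L.quotKerEquivRange_symm_apply_image c hc]
      rfl
    let ℓ : S →ₗᵢ[ℝ] V :=
      ⟨φ, by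
        rintro ⟨x, c, rfl⟩
        rw [φ_apply c ⟨c, rfl⟩]
        exact norm_eq c⟩
    let T : V →ₗᵢ[ℝ] V := ℓ.extend
    have hT : ∀ c : Fin n → ℝ, T (L c) = M c := by
      intro c
      have := ℓ.extend_apply ⟨L c, ⟨c, rfl⟩⟩
      rw [this]
      exact φ_apply c ⟨c, rfl⟩
    let A : Matrix (Fin k) (Fin k) ℝ :=
      LinearMap.toMatrix' ((WithLp.linearEquiv 2 ℝ (Fin k → ℝ)).toLinearMap ∘ₗ T.toLinearMap ∘ₗ (WithLp.linearEquiv 2 ℝ (Fin k → ℝ)).symm.toLinearMap)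
    have hA : ∀ v : V, A.mulVec v.ofLp = (T v).ofLp := by
      intro v
      rw [← Matrix.toLin'_apply, Matrix.toLin'_toMatrix']
      rfl
    have orth : Aᵀ * A = 1 := by
      ext i j
      have h1 : (inner ℝ (T (EuclideanSpace.single i 1)) (T (EuclideanSpace.single j 1)) : ℝ)
          = inner ℝ (EuclideanSpace.single i (1:ℝ)) (EuclideanSpace.single j 1) := T.inner_map_map _ _
      rw [inner_dot, inner_dot, ← hA (EuclideanSpace.single i 1),
        ← hA (EuclideanSpace.single j 1)] at h1
      have h2 : (A.mulVec (EuclideanSpace.single i 1)) ⬝ᵥ (A.mulVec (EuclideanSpace.single j 1))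
          = (Aᵀ * A) i j := by
        show (A.mulVec (Pi.single i 1)) ⬝ᵥ (A.mulVec (Pi.single j 1)) = (Aᵀ * A) i j
        simp [Matrix.mulVec_single, dotProduct, Matrix.mul_apply, Matrix.transpose_apply]
      have h3 : (EuclideanSpace.single i (1:ℝ) : EuclideanSpace ℝ (Fin k)) ⬝ᵥ (EuclideanSpace.single j 1)
          = (1 : Matrix (Fin k) (Fin k) ℝ) i j := by
        show (Pi.single i 1 : Fin k → ℝ) ⬝ᵥ (Pi.single j 1) = (1 : Matrix (Fin k) (Fin k) ℝ) i j
        by_cases hij : i = j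
        · simp [dotProduct, Matrix.one_apply, Pi.single_apply, hij]
        · simp [dotProduct, Matrix.one_apply, Pi.single_apply, hij, Ne.symm hij]
      rw [h2, h3] at h1
      exact h1
    refine ⟨Aᵀ, ?_, ?_, ?_⟩
    · rw [Matrix.transpose_transpose]
      exact mul_eq_one_comm.mp orth
    · rw [Matrix.transpose_transpose]
      exact orth
    · ext i j
      have hrow : A.mulVec (fun l => K i l) = fun l => P i l := by
        have h1 : (L (Pi.single i 1)).ofLp = fun l => K i l := by
          ext l
          show Kᵀ.mulVec (Pi.single i 1) l = K i l
          simp [Matrix.mulVec, dotProduct, Pi.single_apply]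
        have h2 : (M (Pi.single i 1)).ofLp = fun l => P i l := by
          ext l
          show Pᵀ.mulVec (Pi.single i 1) l = P i l
          simp [Matrix.mulVec, dotProduct, Pi.single_apply]
        rw [← h1, ← h2, hA]
        exact congrArg WithLp.ofLp (hT (Pi.single i 1))
      have := congrFun hrow j
      simp only [Matrix.mulVec, dotProduct] at this
      rw [Matrix.mul_apply]
      simp only [Matrix.transpose_apply]
      rw [← this]
      exact Finset.sum_congr rfl fun l _ => mul_comm _ _
  · rintro ⟨Q, hQ1, hQ2, rfl⟩
    rw [Matrix.transpose_mul, Matrix.mul_assoc, ← Matrix.mul_assoc Q, hQ2, Matrix.one_mul]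
end

section
/- Let f be a lower semi-continuous function mapping the real symmetric n × n matrices to [−∞, ∞], whose domain (set of points with f < +∞) has non-empty intersection with the positive semidefinite matrices. Consider the rank-constrained problem min_{X ⪰ 0, rank(X) ≤ k} f(X) and, for P ∈ ℝ^{n×k}, define g(P) := f(P Pᵀ). Let P̄ ∈ ℝ^{n×k} and set X̄ = P̄ P̄ᵀ (so X̄ is feasible: X̄ ⪰ 0 and rank(X̄) ≤ k). Then X̄ is a local minimizer of the rank-constrained problem if and only if P̄ is a local minimizer of g. -/
open Matrix

/-- The Frobenius norm of a real matrix. -/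
noncomputable def frobNorm {a b : ℕ} (A : Matrix (Fin a) (Fin b) ℝ) : ℝ :=
  Real.sqrt (∑ i, ∑ j, (A i j) ^ 2)

attribute [local instance] Matrix.frobeniusSeminormedAddCommGroup
  Matrix.frobeniusNormedAddCommGroup Matrix.frobeniusNormedSpace

namespace BurerMonteiroAux

lemma frobNorm_eq {a b : ℕ} (A : Matrix (Fin a) (Fin b) ℝ) : frobNorm A = ‖A‖ := by
  rw [Matrix.frobenius_norm_def, frobNorm, Real.sqrt_eq_rpow]
  congr 1
  simp [Real.rpow_two, Real.norm_eq_abs, sq_abs]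

lemma entry_le_norm {a b : ℕ} (A : Matrix (Fin a) (Fin b) ℝ) (i : Fin a) (j : Fin b) :
    |A i j| ≤ ‖A‖ := by
  rw [← frobNorm_eq, frobNorm, ← Real.sqrt_sq_eq_abs]
  apply Real.sqrt_le_sqrt
  calc A i j ^ 2 ≤ ∑ j', (A i j') ^ 2 :=
        Finset.single_le_sum (fun j' _ => sq_nonneg (A i j')) (Finset.mem_univ j)
    _ ≤ ∑ i', ∑ j', (A i' j') ^ 2 :=
        Finset.single_le_sum
          (fun i' _ => Finset.sum_nonneg fun j' _ => sq_nonneg (A i' j'))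
          (Finset.mem_univ i)

lemma norm_sq_eq_trace {a b : ℕ} (Q : Matrix (Fin a) (Fin b) ℝ) :
    ‖Q‖ ^ 2 = ∑ i, (Q * Qᵀ) i i := by
  rw [← frobNorm_eq, frobNorm, Real.sq_sqrt (by positivity)]
  refine Finset.sum_congr rfl fun i _ => ?_
  rw [mul_apply]
  exact Finset.sum_congr rfl fun j _ => by rw [transpose_apply, sq]

lemma conjT_eq_transpose {a b : ℕ} (A : Matrix (Fin a) (Fin b) ℝ) : Aᴴ = Aᵀ := by
  ext i j; simp [conjTranspose_apply]

lemma psd_mul_transpose {a b : ℕ} (A : Matrix (Fin a) (Fin b) ℝ) :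
    (A * Aᵀ).PosSemidef := by
  have := Matrix.posSemidef_self_mul_conjTranspose A
  rwa [conjT_eq_transpose] at this

lemma exists_factor {n k : ℕ} (X : Matrix (Fin n) (Fin n) ℝ) (hX : X.PosSemidef)
    (hrank : X.rank ≤ k) : ∃ Q : Matrix (Fin n) (Fin k) ℝ, X = Q * Qᵀ := by
  classical
  have hA := hX.1
  set ev := hA.eigenvalues with hev
  have hcard : Fintype.card {i // ev i ≠ 0} ≤ Fintype.card (Fin k) := by
    rw [Fintype.card_fin, ← hA.rank_eq_card_non_zero_eigs]; exact hrank
  obtain ⟨ι⟩ := Function.Embedding.nonempty_of_card_le hcard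
  set E : Matrix (Fin n) (Fin k) ℝ := fun i c =>
    if h : ev i ≠ 0 then (if ι ⟨i, h⟩ = c then Real.sqrt (ev i) else 0) else 0 with hE
  have hEE : E * Eᵀ = diagonal ev := by
    ext i j
    rw [mul_apply, diagonal]
    by_cases hi : ev i ≠ 0
    · by_cases hj : ev j ≠ 0
      · by_cases hij : i = j
        · subst hij
          simp only [transpose_apply]
          simp only [hE, dif_pos hi]
          rw [Finset.sum_eq_single (ι ⟨i, hi⟩)]
          · simp [Real.mul_self_sqrt (hX.eigenvalues_nonneg i)]
            exact Real.mul_self_sqrt (hX.eigenvalues_nonneg i)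
          · intro c _ hc
            rw [if_neg (fun h => hc h.symm), zero_mul]
          · simp
        · simp only [transpose_apply]
          simp only [hE, dif_pos hi, dif_pos hj, of_apply]
          rw [Finset.sum_eq_zero, if_neg hij]
          intro c _
          by_cases h1 : ι ⟨i, hi⟩ = c
          · have h2 : ι ⟨j, hj⟩ ≠ c := by
              intro h2
              exact hij (congrArg Subtype.val (ι.injective (h2.trans h1.symm))).symm
            rw [if_neg h2, mul_zero]
          · rw [if_neg h1, zero_mul]
      · push_neg at hj
        simp only [transpose_apply]
        simp only [hE, dif_neg (not_not.mpr hj), of_apply]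
        rw [Finset.sum_eq_zero (by intro c _; simp), eq_comm]
        by_cases hij : i = j
        · subst hij; simp [hj]
        · simp [if_neg hij]
    · push_neg at hi
      simp only [transpose_apply]
      simp only [hE, dif_neg (not_not.mpr hi), of_apply]
      rw [Finset.sum_eq_zero (by intro c _; simp), eq_comm]
      by_cases hij : i = j
      · subst hij; simp [hi]
      · simp [if_neg hij]
  set U : Matrix (Fin n) (Fin n) ℝ := (hA.eigenvectorUnitary : Matrix (Fin n) (Fin n) ℝ)
  refine ⟨U * E, ?_⟩
  have hspec := hA.spectral_theorem
  have h1 : (RCLike.ofReal ∘ ev : Fin n → ℝ) = ev := by ext i; simp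
  rw [h1] at hspec
  have hstar : (star (hA.eigenvectorUnitary : Matrix (Fin n) (Fin n) ℝ)) = Uᵀ := by
    ext i j; simp [U, Matrix.star_apply]
  calc X = U * diagonal ev * Uᵀ := by rw [hspec, Unitary.conjStarAlgAut_apply, hstar]
    _ = U * (E * Eᵀ) * Uᵀ := by rw [hEE]
    _ = (U * E) * (U * E)ᵀ := by rw [transpose_mul]; simp only [Matrix.mul_assoc]

lemma exists_orth {n k : ℕ} (P Q : Matrix (Fin n) (Fin k) ℝ)
    (h : P * Pᵀ = Q * Qᵀ) :
    ∃ R : Matrix (Fin k) (Fin k) ℝ, R * Rᵀ = 1 ∧ Rᵀ * R = 1 ∧ Q = P * R := by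
  classical
  set E := EuclideanSpace ℝ (Fin k)
  let eq : (Fin k → ℝ) ≃ₗ[ℝ] E := (WithLp.linearEquiv 2 ℝ (Fin k → ℝ)).symm
  let φ : (Fin n → ℝ) →ₗ[ℝ] E := eq.toLinearMap ∘ₗ (Pᵀ).mulVecLin
  let ψ : (Fin n → ℝ) →ₗ[ℝ] E := eq.toLinearMap ∘ₗ (Qᵀ).mulVecLin
  have key : ∀ (A : Matrix (Fin n) (Fin k) ℝ) (x y : Fin n → ℝ),
      (inner ℝ (eq ((Aᵀ).mulVec x)) (eq ((Aᵀ).mulVec y)) : ℝ)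
        = ∑ i, ∑ j, x i * y j * (A * Aᵀ) i j := by
    intro A x y
    rw [PiLp.inner_apply]
    have hc : ∀ c, (inner (𝕜 := ℝ) (eq ((Aᵀ).mulVec x) c) (eq ((Aᵀ).mulVec y) c) : ℝ)
        = (∑ i, A i c * x i) * (∑ j, A j c * y j) := by
      intro c
      rw [RCLike.inner_apply]
      simp only [starRingEnd_apply, star_trivial]
      rw [mul_comm]
      congr 1 <;>
        simp [eq, Matrix.mulVec, dotProduct, transpose_apply, WithLp.linearEquiv,
          Matrix.mulVecLin]
    rw [Finset.sum_congr rfl fun c _ => hc c]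
    simp_rw [Finset.sum_mul_sum, mul_apply, transpose_apply, Finset.mul_sum]
    rw [Finset.sum_comm]
    refine Finset.sum_congr rfl fun i _ => ?_
    rw [Finset.sum_comm]
    refine Finset.sum_congr rfl fun j _ => Finset.sum_congr rfl fun c _ => by ring
  have hinner : ∀ x y, (inner ℝ (φ x) (φ y) : ℝ) = inner ℝ (ψ x) (ψ y) := by
    intro x y
    show (inner ℝ (eq ((Pᵀ).mulVec x)) (eq ((Pᵀ).mulVec y)) : ℝ)
        = inner ℝ (eq ((Qᵀ).mulVec x)) (eq ((Qᵀ).mulVec y))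
    rw [key P, key Q, h]
  have hnorm : ∀ x, ‖φ x‖ = ‖ψ x‖ := by
    intro x
    have h1 : ‖φ x‖ ^ 2 = ‖ψ x‖ ^ 2 := by
      rw [← real_inner_self_eq_norm_sq, ← real_inner_self_eq_norm_sq, hinner]
    nlinarith [norm_nonneg (φ x), norm_nonneg (ψ x)]
  have hker : ∀ x ∈ LinearMap.ker φ, x ∈ LinearMap.ker ψ := by
    intro x hx
    rw [LinearMap.mem_ker] at hx ⊢
    have := hnorm x
    rw [hx, norm_zero] at this
    exact norm_eq_zero.mp this.symm
  let e := φ.quotKerEquivRange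
  let ψq : ((Fin n → ℝ) ⧸ LinearMap.ker φ) →ₗ[ℝ] E :=
    (LinearMap.ker φ).liftQ ψ hker
  let Lmap : LinearMap.range φ →ₗ[ℝ] E := ψq ∘ₗ e.symm.toLinearMap
  have hLφ : ∀ x : Fin n → ℝ, Lmap ⟨φ x, LinearMap.mem_range_self φ x⟩ = ψ x := by
    intro x
    have he : e.symm ⟨φ x, LinearMap.mem_range_self φ x⟩ = Submodule.Quotient.mk x := by
      apply e.injective
      rw [LinearEquiv.apply_symm_apply]
      rfl
    show ψq (e.symm ⟨φ x, LinearMap.mem_range_self φ x⟩) = ψ x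
    rw [he]
    rfl
  have hLnorm : ∀ s : LinearMap.range φ, ‖Lmap s‖ = ‖s‖ := by
    rintro ⟨s, x, rfl⟩
    rw [hLφ x, ← hnorm x]
    rfl
  let L : LinearMap.range φ →ₗᵢ[ℝ] E := ⟨Lmap, hLnorm⟩
  let T : E →ₗᵢ[ℝ] E := L.extend
  have hT : ∀ x : Fin n → ℝ, T (φ x) = ψ x := by
    intro x
    have := L.extend_apply ⟨φ x, LinearMap.mem_range_self φ x⟩
    rw [this]
    exact hLφ x
  let Tlin : (Fin k → ℝ) →ₗ[ℝ] (Fin k → ℝ) :=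
    eq.symm.toLinearMap ∘ₗ T.toLinearMap ∘ₗ eq.toLinearMap
  let M : Matrix (Fin k) (Fin k) ℝ := LinearMap.toMatrix' Tlin
  have hM : ∀ v, M.mulVec v = Tlin v := by
    intro v
    rw [← Matrix.toLin'_apply, Matrix.toLin'_toMatrix']
  have hMP : M * Pᵀ = Qᵀ := by
    have hmv : ∀ x, (M * Pᵀ).mulVec x = (Qᵀ).mulVec x := by
      intro x
      rw [← Matrix.mulVec_mulVec, hM]
      show eq.symm (T (eq ((Pᵀ).mulVec x))) = (Qᵀ).mulVec x
      have h2 : T (φ x) = ψ x := hT x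
      show eq.symm (T (φ x)) = (Qᵀ).mulVec x
      rw [h2]
      rfl
    ext i j
    have := congrFun (hmv (Pi.single j 1)) i
    rw [Matrix.mulVec_single, Matrix.mulVec_single] at this
    simpa using this
  have hMtM : Mᵀ * M = 1 := by
    ext c d
    have hTinner := T.inner_map_map (EuclideanSpace.single c (1:ℝ))
      (EuclideanSpace.single d (1:ℝ))
    have hl : (inner ℝ (T (EuclideanSpace.single c (1:ℝ)))
        (T (EuclideanSpace.single d (1:ℝ))) : ℝ) = (Mᵀ * M) c d := by
      rw [PiLp.inner_apply]
      rw [mul_apply]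
      refine Finset.sum_congr rfl fun a _ => ?_
      rw [RCLike.inner_apply]
      simp only [starRingEnd_apply, star_trivial, transpose_apply]
      have hc : (T (EuclideanSpace.single c (1:ℝ))) a = M a c := by
        have hmc : M.mulVec (Pi.single c 1) = Tlin (Pi.single c 1) := hM _
        rw [Matrix.mulVec_single] at hmc
        have h2 := congrFun hmc a
        simp only [mul_one, MulOpposite.op_one, one_smul, Matrix.col_apply] at h2
        exact h2.symm
      have hd : (T (EuclideanSpace.single d (1:ℝ))) a = M a d := by
        have hmd : M.mulVec (Pi.single d 1) = Tlin (Pi.single d 1) := hM _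
        rw [Matrix.mulVec_single] at hmd
        have h2 := congrFun hmd a
        simp only [mul_one, MulOpposite.op_one, one_smul, Matrix.col_apply] at h2
        exact h2.symm
      rw [hc, hd, mul_comm]
    have hr : (inner ℝ (EuclideanSpace.single c (1:ℝ))
        (EuclideanSpace.single d (1:ℝ)) : ℝ) = (1 : Matrix (Fin k) (Fin k) ℝ) c d := by
      rw [EuclideanSpace.inner_single_left]
      simp [EuclideanSpace.single_apply, Matrix.one_apply, eq_comm]
    rw [← hl, hTinner, hr]
  have hMMt : M * Mᵀ = 1 := mul_eq_one_comm.mp hMtM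
  refine ⟨Mᵀ, ?_, ?_, ?_⟩
  · rw [transpose_transpose]; exact hMtM
  · rw [transpose_transpose]; exact hMMt
  · have := congrArg Matrix.transpose hMP
    rw [transpose_mul, transpose_transpose, transpose_transpose] at this
    exact this.symm

end BurerMonteiroAux

open BurerMonteiroAux

/-- Burer–Monteiro: for a lower semi-continuous `f` on symmetric matrices (with values in
`[−∞,∞]`) whose domain meets the PSD cone, and `X̄ = P̄ P̄ᵀ`, the point `X̄` is a local
minimizer of `min_{X ⪰ 0, rank X ≤ k} f(X)` iff `P̄` is a local minimizer of
`g(P) = f(P Pᵀ)`. -/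
theorem burer_monteiro_local_min (n k : ℕ)
    (f : Matrix (Fin n) (Fin n) ℝ → EReal)
    (hf : LowerSemicontinuous f)
    (hdom : ∃ X : Matrix (Fin n) (Fin n) ℝ, X.PosSemidef ∧ f X < ⊤)
    (Pbar : Matrix (Fin n) (Fin k) ℝ) :
    ((∃ ε > 0, ∀ X : Matrix (Fin n) (Fin n) ℝ, X.PosSemidef → X.rank ≤ k →
        frobNorm (X - Pbar * Pbarᵀ) < ε → f (Pbar * Pbarᵀ) ≤ f X) ↔
      (∃ ε > 0, ∀ P : Matrix (Fin n) (Fin k) ℝ,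
        frobNorm (P - Pbar) < ε → f (Pbar * Pbarᵀ) ≤ f (P * Pᵀ))) := by
  clear hf hdom
  set W : Matrix (Fin n) (Fin n) ℝ := Pbar * Pbarᵀ with hW
  constructor
  · rintro ⟨δ, hδ, hloc⟩
    refine ⟨min 1 (δ / (2 * ‖Pbar‖ + 2)), by positivity, fun P hP => ?_⟩
    rw [frobNorm_eq] at hP
    have hP1 : ‖P - Pbar‖ < 1 := lt_of_lt_of_le hP (min_le_left _ _)
    have hP2 : ‖P - Pbar‖ < δ / (2 * ‖Pbar‖ + 2) := lt_of_lt_of_le hP (min_le_right _ _)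
    apply hloc _ (psd_mul_transpose P)
      ((Matrix.rank_mul_le_left P Pᵀ).trans
        ((Matrix.rank_le_card_width P).trans (by simp)))
    rw [frobNorm_eq]
    have hsplit : P * Pᵀ - W = P * (P - Pbar)ᵀ + (P - Pbar) * Pbarᵀ := by
      rw [hW, transpose_sub, Matrix.mul_sub, Matrix.sub_mul, sub_add_sub_cancel]
    have hPn : ‖P‖ ≤ ‖Pbar‖ + 1 := by
      have := norm_sub_norm_le P Pbar
      linarith
    calc ‖P * Pᵀ - W‖ ≤ ‖P * (P - Pbar)ᵀ‖ + ‖(P - Pbar) * Pbarᵀ‖ := by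
          rw [hsplit]; exact norm_add_le _ _
      _ ≤ ‖P‖ * ‖(P - Pbar)ᵀ‖ + ‖P - Pbar‖ * ‖Pbarᵀ‖ := by
          gcongr <;> exact Matrix.frobenius_norm_mul _ _
      _ = ‖P‖ * ‖P - Pbar‖ + ‖P - Pbar‖ * ‖Pbar‖ := by
          rw [Matrix.frobenius_norm_transpose, Matrix.frobenius_norm_transpose]
      _ ≤ (2 * ‖Pbar‖ + 2) * ‖P - Pbar‖ := by nlinarith [norm_nonneg (P - Pbar), norm_nonneg Pbar]
      _ < (2 * ‖Pbar‖ + 2) * (δ / (2 * ‖Pbar‖ + 2)) := by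
          have : (0:ℝ) < 2 * ‖Pbar‖ + 2 := by positivity
          exact (mul_lt_mul_iff_right₀ this).mpr hP2
      _ = δ := by field_simp
  · rintro ⟨ε, hε, hloc⟩
    by_contra hcon
    push_neg at hcon
    have hstep : ∀ m : ℕ, ∃ X : Matrix (Fin n) (Fin n) ℝ, X.PosSemidef ∧ X.rank ≤ k ∧
        frobNorm (X - W) < 1 / (m + 1) ∧ ¬ f W ≤ f X := by
      intro m
      obtain ⟨X, hX1, hX2, hX3, hX4⟩ := hcon (1 / (m + 1)) (by positivity)
      exact ⟨X, hX1, hX2, hX3, not_le.mpr hX4⟩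
    choose X hX1 hX2 hX3 hX4 using hstep
    have hXnorm : ∀ m, ‖X m - W‖ < 1 / (m + 1) := by
      intro m; rw [← frobNorm_eq]; exact hX3 m
    choose Q hQ using fun m => exists_factor (X m) (hX1 m) (hX2 m)
    set C : ℝ := Real.sqrt (n * (‖W‖ + 1)) with hC
    have hQb : ∀ m, ‖Q m‖ ≤ C := by
      intro m
      have h1 : ‖Q m‖ ^ 2 = ∑ i, (X m) i i := by
        rw [norm_sq_eq_trace, hQ m]
      have hXb : ‖X m‖ ≤ ‖W‖ + 1 := by
        have := hXnorm m
        have h2 : (1:ℝ) / (m + 1) ≤ 1 := by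
          rw [div_le_one (by positivity)]; linarith [Nat.cast_nonneg (α := ℝ) m]
        have := norm_sub_norm_le (X m) W
        linarith
      have h3 : ‖Q m‖ ^ 2 ≤ n * (‖W‖ + 1) := by
        rw [h1]
        calc ∑ i, (X m) i i ≤ ∑ _i : Fin n, ‖X m‖ := by
              refine Finset.sum_le_sum fun i _ => ?_
              exact (le_abs_self _).trans (entry_le_norm (X m) i i)
          _ = n * ‖X m‖ := by simp [Finset.sum_const, nsmul_eq_mul]
          _ ≤ n * (‖W‖ + 1) := by
              have : (0:ℝ) ≤ n := Nat.cast_nonneg n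
              nlinarith
      calc ‖Q m‖ = Real.sqrt (‖Q m‖ ^ 2) := (Real.sqrt_sq (norm_nonneg _)).symm
        _ ≤ C := Real.sqrt_le_sqrt h3
    have hball : ∀ m, Q m ∈ Metric.closedBall (0 : Matrix (Fin n) (Fin k) ℝ) C := by
      intro m; rw [Metric.mem_closedBall, dist_zero_right]; exact hQb m
    obtain ⟨a, ha, g, hg, htend⟩ := (isCompact_closedBall
      (0 : Matrix (Fin n) (Fin k) ℝ) C).tendsto_subseq hball
    rw [Metric.tendsto_atTop] at htend
    have hanorm : ‖a‖ ≤ C := by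
      rw [← dist_zero_right]; exact Metric.mem_closedBall.mp ha
    have hCpos : 0 ≤ C := Real.sqrt_nonneg _
    -- a * aᵀ = W
    have haaT : a * aᵀ = W := by
      by_contra hne
      have hpos : 0 < ‖a * aᵀ - W‖ := by
        rw [norm_pos_iff]; exact sub_ne_zero.mpr hne
      set η := ‖a * aᵀ - W‖
      obtain ⟨N1, hN1⟩ := htend (η / 2 / (2 * C + 1)) (by positivity)
      obtain ⟨N2, hN2⟩ := exists_nat_one_div_lt (K := ℝ) (show (0:ℝ) < η / 2 by positivity)
      set m := max N1 N2
      have hd := hN1 m (le_max_left _ _)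
      rw [dist_eq_norm] at hd
      have hgm : (N2 : ℝ) + 1 ≤ (g m : ℝ) + 1 := by
        have h1 : N2 ≤ m := le_max_right _ _
        have h2 : m ≤ g m := hg.le_apply
        have : (N2:ℝ) ≤ g m := by exact_mod_cast h1.trans h2
        linarith
      have hXsmall : ‖X (g m) - W‖ < η / 2 := by
        calc ‖X (g m) - W‖ < 1 / (g m + 1) := hXnorm (g m)
          _ ≤ 1 / (N2 + 1) := by
              apply div_le_div_of_nonneg_left (by norm_num) (by positivity) hgm
          _ < η / 2 := hN2
      have hsplit : a * aᵀ - Q (g m) * (Q (g m))ᵀ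
          = a * (a - Q (g m))ᵀ + (a - Q (g m)) * (Q (g m))ᵀ := by
        rw [transpose_sub, Matrix.mul_sub, Matrix.sub_mul, sub_add_sub_cancel]
      have hb1 : ‖a * aᵀ - Q (g m) * (Q (g m))ᵀ‖ ≤ (2 * C + 1) * ‖Q (g m) - a‖ := by
        calc ‖a * aᵀ - Q (g m) * (Q (g m))ᵀ‖
            ≤ ‖a * (a - Q (g m))ᵀ‖ + ‖(a - Q (g m)) * (Q (g m))ᵀ‖ := by
              rw [hsplit]; exact norm_add_le _ _
          _ ≤ ‖a‖ * ‖(a - Q (g m))ᵀ‖ + ‖a - Q (g m)‖ * ‖(Q (g m))ᵀ‖ := by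
              gcongr <;> exact Matrix.frobenius_norm_mul _ _
          _ = ‖a‖ * ‖a - Q (g m)‖ + ‖a - Q (g m)‖ * ‖Q (g m)‖ := by
              rw [Matrix.frobenius_norm_transpose, Matrix.frobenius_norm_transpose]
          _ = (‖a‖ + ‖Q (g m)‖) * ‖Q (g m) - a‖ := by
              rw [norm_sub_rev (a := a)]; ring
          _ ≤ (2 * C + 1) * ‖Q (g m) - a‖ := by
              have := hQb (g m)
              nlinarith [norm_nonneg (Q (g m) - a)]
      have : η < η := by
        calc η = ‖(a * aᵀ - Q (g m) * (Q (g m))ᵀ) + (X (g m) - W)‖ := by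
              rw [← hQ (g m), sub_add_sub_cancel]
          _ ≤ ‖a * aᵀ - Q (g m) * (Q (g m))ᵀ‖ + ‖X (g m) - W‖ := norm_add_le _ _
          _ < (2 * C + 1) * (η / 2 / (2 * C + 1)) + η / 2 := by
              have h5 : (2 * C + 1) * ‖Q (g m) - a‖ < (2 * C + 1) * (η / 2 / (2 * C + 1)) :=
                (mul_lt_mul_iff_right₀ (by positivity)).mpr hd
              linarith [hb1.trans_lt h5, hXsmall]
          _ = η := by field_simp; ring
      exact lt_irrefl _ this
    obtain ⟨R, hR1, hR2, hQa⟩ := exists_orth Pbar a haaT.symm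
    obtain ⟨N1, hN1⟩ := htend (ε / (‖R‖ + 1)) (by positivity)
    have hd := hN1 N1 le_rfl
    rw [dist_eq_norm] at hd
    set Qm := Q (g N1)
    set P' : Matrix (Fin n) (Fin k) ℝ := Qm * Rᵀ with hP'
    have hP'X : P' * P'ᵀ = X (g N1) := by
      rw [hP', transpose_mul, transpose_transpose, hQ (g N1)]
      calc Qm * Rᵀ * (R * Qmᵀ) = Qm * (Rᵀ * R) * Qmᵀ := by
            simp only [Matrix.mul_assoc]
        _ = Qm * Qmᵀ := by rw [hR2, Matrix.mul_one]
    have hclose : frobNorm (P' - Pbar) < ε := by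
      rw [frobNorm_eq]
      have hPb : Pbar = a * Rᵀ := by
        rw [hQa, Matrix.mul_assoc, hR1, Matrix.mul_one]
      have : P' - Pbar = (Qm - a) * Rᵀ := by
        rw [hP', hPb, Matrix.sub_mul]
      rw [this]
      calc ‖(Qm - a) * Rᵀ‖ ≤ ‖Qm - a‖ * ‖Rᵀ‖ := Matrix.frobenius_norm_mul _ _
        _ = ‖Qm - a‖ * ‖R‖ := by rw [Matrix.frobenius_norm_transpose]
        _ ≤ ‖Qm - a‖ * (‖R‖ + 1) := by
            have := norm_nonneg (Qm - a); nlinarith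
        _ < (ε / (‖R‖ + 1)) * (‖R‖ + 1) := by
            have hpos : (0:ℝ) < ‖R‖ + 1 := by positivity
            exact (mul_lt_mul_iff_left₀ hpos).mpr hd
        _ = ε := by field_simp
    have := hloc P' hclose
    rw [hP'X] at this
    exact hX4 (g N1) this
end

section
/- Let L ∈ ℝ^{m×n} with rank(L) ≤ k. Then the nuclear norm of L equals the minimum of ½(‖U‖_F² + ‖V‖_F²) over all factorizations L = U Vᵀ with U ∈ ℝ^{m×k} and V ∈ ℝ^{n×k}; that is, ‖L‖_* = min { ½(‖U‖_F² + ‖V‖_F²) : U ∈ ℝ^{m×k}, V ∈ ℝ^{n×k}, U Vᵀ = L }, and the minimum is attained. -/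
open Matrix

/-- The singular values of a real `m × n` matrix: the nonnegative square roots of the
eigenvalues of the positive semidefinite matrix `Lᵀ L` (indexed by columns). -/
noncomputable def singVals {m n : ℕ} (L : Matrix (Fin m) (Fin n) ℝ) : Fin n → ℝ :=
  fun i => Real.sqrt ((Matrix.isHermitian_conjTranspose_mul_self L).eigenvalues i)

/-- The nuclear norm: the sum of the singular values. -/
noncomputable def nuclearNorm {m n : ℕ} (L : Matrix (Fin m) (Fin n) ℝ) : ℝ :=
  ∑ i, singVals L i

/-- The squared Frobenius norm. -/
def frobSq {a b : ℕ} (A : Matrix (Fin a) (Fin b) ℝ) : ℝ :=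
  ∑ i, ∑ j, (A i j) ^ 2

namespace NNaux
variable {m n : ℕ}

noncomputable def mu (L : Matrix (Fin m) (Fin n) ℝ) : Fin n → ℝ :=
  (Matrix.isHermitian_conjTranspose_mul_self L).eigenvalues

noncomputable def q (L : Matrix (Fin m) (Fin n) ℝ) (i : Fin n) : Fin n → ℝ :=
  fun a => ((Matrix.isHermitian_conjTranspose_mul_self L).eigenvectorUnitary : Matrix (Fin n) (Fin n) ℝ) a i

lemma col_orth (L : Matrix (Fin m) (Fin n) ℝ) (i j : Fin n) :
    ∑ a, q L i a * q L j a = if i = j then 1 else 0 := by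
  have h := Matrix.UnitaryGroup.star_mul_self
    ((Matrix.isHermitian_conjTranspose_mul_self L).eigenvectorUnitary)
  have h2 := congr_fun (congr_fun h i) j
  simp only [Matrix.mul_apply, Matrix.star_apply, star_trivial, Matrix.one_apply] at h2
  simpa [q, mul_comm] using h2

lemma row_orth (L : Matrix (Fin m) (Fin n) ℝ) (a b : Fin n) :
    ∑ i, q L i a * q L i b = if a = b then 1 else 0 := by
  have h := ((Matrix.isHermitian_conjTranspose_mul_self L).eigenvectorUnitary).2.2
  have h2 := congr_fun (congr_fun h a) b
  simp only [Matrix.mul_apply, Matrix.star_apply, star_trivial, Matrix.one_apply] at h2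
  simpa [q] using h2

lemma LtL_q (L : Matrix (Fin m) (Fin n) ℝ) (i : Fin n) :
    Lᵀ *ᵥ (L *ᵥ q L i) = mu L i • q L i := by
  have h := (Matrix.isHermitian_conjTranspose_mul_self L).mulVec_eigenvectorBasis i
  rw [Matrix.mulVec_mulVec]
  exact h

lemma mu_nonneg (L : Matrix (Fin m) (Fin n) ℝ) (i : Fin n) : 0 ≤ mu L i := by
  have h : (Lᵀ * L).PosSemidef := by
    have h0 := Matrix.posSemidef_conjTranspose_mul_self L
    have : Lᴴ = Lᵀ := by ext a b; simp [Matrix.conjTranspose_apply]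
    rwa [this] at h0
  exact h.eigenvalues_nonneg i

lemma dot_Lq (L : Matrix (Fin m) (Fin n) ℝ) (i j : Fin n) :
    ∑ a, (L *ᵥ q L i) a * (L *ᵥ q L j) a = if i = j then mu L i else 0 := by
  have h : (L *ᵥ q L i) ⬝ᵥ (L *ᵥ q L j) = (Lᵀ *ᵥ (L *ᵥ q L i)) ⬝ᵥ q L j := by
    rw [Matrix.dotProduct_mulVec, Matrix.mulVec_transpose]
  have h2 : (L *ᵥ q L i) ⬝ᵥ (L *ᵥ q L j) = mu L i * ∑ a, q L i a * q L j a := by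
    rw [h, LtL_q, smul_dotProduct]
    simp [dotProduct, Finset.mul_sum]
  rw [show (∑ a, (L *ᵥ q L i) a * (L *ᵥ q L j) a) = (L *ᵥ q L i) ⬝ᵥ (L *ᵥ q L j) from rfl,
    h2, col_orth]
  by_cases hij : i = j <;> simp [hij]

lemma Lq_zero (L : Matrix (Fin m) (Fin n) ℝ) {i : Fin n} (h : mu L i = 0) :
    L *ᵥ q L i = 0 := by
  have h0 := dot_Lq L i i
  rw [if_pos rfl, h] at h0
  funext a
  exact (Finset.sum_mul_self_eq_zero_iff Finset.univ _).mp h0 a (Finset.mem_univ a)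

lemma sq_singVals (L : Matrix (Fin m) (Fin n) ℝ) (i : Fin n) :
    singVals L i ^ 2 = mu L i := Real.sq_sqrt (mu_nonneg L i)

lemma singVals_nonneg (L : Matrix (Fin m) (Fin n) ℝ) (i : Fin n) : 0 ≤ singVals L i :=
  Real.sqrt_nonneg _

noncomputable def p (L : Matrix (Fin m) (Fin n) ℝ) (i : Fin n) : Fin m → ℝ :=
  fun a => (singVals L i)⁻¹ * (L *ᵥ q L i) a

lemma p_zero (L : Matrix (Fin m) (Fin n) ℝ) {i : Fin n} (h : mu L i = 0) : p L i = 0 := by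
  funext a; simp [p, Lq_zero L h]

lemma p_dot (L : Matrix (Fin m) (Fin n) ℝ) (i j : Fin n) :
    ∑ a, p L i a * p L j a = if i = j then (if mu L i = 0 then 0 else 1) else 0 := by
  have : ∑ a, p L i a * p L j a
      = (singVals L i)⁻¹ * (singVals L j)⁻¹ * ∑ a, (L *ᵥ q L i) a * (L *ᵥ q L j) a := by
    simp only [p, Finset.mul_sum]; apply Finset.sum_congr rfl; intros; ring
  rw [this, dot_Lq]
  by_cases hij : i = j
  · subst hij
    by_cases hmu : mu L i = 0
    · simp [hmu]
    · have hs : singVals L i ≠ 0 := by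
        intro h0
        apply hmu
        rw [← sq_singVals, h0]; ring
      rw [if_pos rfl, if_pos rfl, if_neg hmu, ← sq_singVals]
      field_simp
  · simp [hij]

lemma p_L_q (L : Matrix (Fin m) (Fin n) ℝ) (i : Fin n) :
    ∑ a, p L i a * (L *ᵥ q L i) a = singVals L i := by
  have : ∑ a, p L i a * (L *ᵥ q L i) a
      = (singVals L i)⁻¹ * ∑ a, (L *ᵥ q L i) a * (L *ᵥ q L i) a := by
    simp only [p, Finset.mul_sum]; apply Finset.sum_congr rfl; intros; ring
  rw [this, dot_Lq, if_pos rfl, ← sq_singVals]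
  by_cases hs : singVals L i = 0
  · simp [hs]
  · field_simp

lemma collapse {ι κ : Type*} [Fintype ι] [Fintype κ] [DecidableEq ι] [DecidableEq κ]
    (e : ι ↪ κ) (x y : ι → ℝ) :
    ∑ j : κ, (∑ i, if e i = j then x i else 0) * (∑ i, if e i = j then y i else 0)
      = ∑ i, x i * y i := by
  rw [← Finset.sum_subset (Finset.subset_univ (Finset.univ.image e))]
  · rw [Finset.sum_image (fun a _ b _ h => e.injective h)]
    apply Finset.sum_congr rfl
    intro i _
    have hx : (∑ i', if e i' = e i then x i' else 0) = x i := by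
      simp [e.injective.eq_iff, Finset.sum_ite_eq']
    have hy : (∑ i', if e i' = e i then y i' else 0) = y i := by
      simp [e.injective.eq_iff, Finset.sum_ite_eq']
    rw [hx, hy]
  · intro j _ hj
    simp only [Finset.mem_image, Finset.mem_univ, true_and, not_exists] at hj
    have hx : (∑ i, if e i = j then x i else 0) = 0 :=
      Finset.sum_eq_zero fun i _ => if_neg (hj i)
    rw [hx, zero_mul]

lemma sum_subtype_ext (P : Fin n → Prop) [DecidablePred P] (F : Fin n → ℝ)
    (hF : ∀ i, ¬ P i → F i = 0) :
    ∑ i : {i // P i}, F i.1 = ∑ i, F i := by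
  rw [← Finset.sum_subtype (Finset.univ.filter P) (fun x => by simp) (fun i => F i)]
  exact Finset.sum_filter_of_ne fun i _ h => by_contra fun hP => h (hF i hP)

lemma reconstruct (L : Matrix (Fin m) (Fin n) ℝ) (a : Fin m) (b : Fin n) :
    ∑ i, (L *ᵥ q L i) a * q L i b = L a b := by
  have h : ∀ i, (L *ᵥ q L i) a = ∑ c, L a c * q L i c := fun i => rfl
  simp_rw [h, Finset.sum_mul]
  rw [Finset.sum_comm]
  have h2 : ∀ c, ∑ i, L a c * q L i c * q L i b = L a c * (if c = b then 1 else 0) := by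
    intro c
    rw [← row_orth L c b, Finset.mul_sum]
    exact Finset.sum_congr rfl fun i _ => by ring
  simp_rw [h2]
  simp

lemma quad_expand {N : ℕ} {ι : Type*} [Fintype ι] (W : Matrix (Fin n) (Fin N) ℝ)
    (v : ι → Fin n → ℝ) :
    ∑ i, ∑ c, (∑ b, W b c * v i b)^2
      = ∑ c, ∑ b, ∑ b', (W b c * W b' c) * (∑ i, v i b * v i b') := by
  rw [Finset.sum_comm]
  apply Finset.sum_congr rfl
  intro c _
  simp_rw [sq, Finset.sum_mul_sum, Finset.mul_sum]
  rw [Finset.sum_comm]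
  apply Finset.sum_congr rfl
  intro b _
  rw [Finset.sum_comm]
  apply Finset.sum_congr rfl
  intro b' _
  apply Finset.sum_congr rfl
  intros; ring

lemma B_eq {N : ℕ} (L : Matrix (Fin m) (Fin n) ℝ) (W : Matrix (Fin n) (Fin N) ℝ) :
    ∑ i, ∑ c, (∑ b, W b c * q L i b)^2 = ∑ b, ∑ c, (W b c)^2 := by
  rw [quad_expand]
  rw [Finset.sum_comm]
  apply Finset.sum_congr rfl
  intro b _
  have h : ∀ c, ∑ b', (W b c * W b' c) * (∑ i, q L i b * q L i b') = W b c ^ 2 := by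
    intro c
    simp_rw [row_orth L, mul_ite, mul_one, mul_zero]
    rw [Finset.sum_ite_eq Finset.univ b (fun b' => W b c * W b' c)]
    simp [sq]
  exact Finset.sum_congr rfl fun c _ => h c

lemma bessel (L : Matrix (Fin m) (Fin n) ℝ) (x : Fin m → ℝ) :
    ∑ i : Fin n, (∑ a, x a * p L i a)^2 ≤ ∑ a, (x a)^2 := by
  set c : Fin n → ℝ := fun i => ∑ a, x a * p L i a with hc
  set t : ℝ := ∑ i, (c i)^2 with ht
  set w : Fin m → ℝ := fun a => ∑ i, c i * p L i a with hw
  have hczero : ∀ i, mu L i = 0 → c i = 0 := by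
    intro i h
    simp [hc, p_zero L h]
  have hwx : ∑ a, w a * x a = t := by
    simp_rw [hw, Finset.sum_mul]
    rw [Finset.sum_comm]
    apply Finset.sum_congr rfl
    intro i _
    have hci : c i = ∑ a, x a * p L i a := rfl
    rw [sq, hci, Finset.mul_sum]
    exact Finset.sum_congr rfl fun a _ => by ring
  have hww : ∑ a, w a * w a = t := by
    simp_rw [hw, Finset.sum_mul_sum]
    rw [Finset.sum_comm]
    have h1 : ∀ i, ∑ a, ∑ j, (c i * p L i a) * (c j * p L j a) = (c i)^2 := by
      intro i
      rw [Finset.sum_comm]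
      have h2 : ∀ j, ∑ a, (c i * p L i a) * (c j * p L j a)
          = c i * c j * ∑ a, p L i a * p L j a := by
        intro j
        rw [Finset.mul_sum]
        exact Finset.sum_congr rfl fun a _ => by ring
      simp_rw [h2, p_dot L, mul_ite, mul_one, mul_zero]
      rw [Finset.sum_ite_eq Finset.univ i (fun j => if mu L i = 0 then 0 else c i * c j)]
      by_cases hmu : mu L i = 0
      · simp [hmu, hczero i hmu]
      · simp [hmu, sq]
    simp_rw [h1]
    exact ht.symm
  have hCS := Finset.sum_mul_sq_le_sq_mul_sq Finset.univ w x
  have htn : 0 ≤ t := Finset.sum_nonneg fun i _ => sq_nonneg _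
  have hxn : 0 ≤ ∑ a, (x a)^2 := Finset.sum_nonneg fun a _ => sq_nonneg _
  have hw2 : ∑ a, (w a)^2 = t := by simpa [sq] using hww
  rw [hwx, hw2] at hCS
  nlinarith [hCS, htn, hxn]

lemma A_le {N : ℕ} (L : Matrix (Fin m) (Fin n) ℝ) (W : Matrix (Fin m) (Fin N) ℝ) :
    ∑ i : Fin n, ∑ c, (∑ a, W a c * p L i a)^2 ≤ ∑ a, ∑ c, (W a c)^2 := by
  rw [Finset.sum_comm]
  calc ∑ c, ∑ i : Fin n, (∑ a, W a c * p L i a)^2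
      ≤ ∑ c, ∑ a, (W a c)^2 :=
        Finset.sum_le_sum fun c _ => bessel L (fun a => W a c)
    _ = ∑ a, ∑ c, (W a c)^2 := Finset.sum_comm

end NNaux

/-- For `L` of rank at most `k`, the nuclear norm equals the (attained) minimum of
`½(‖U‖_F² + ‖V‖_F²)` over all factorizations `L = U Vᵀ` with `U ∈ ℝ^{m×k}`, `V ∈ ℝ^{n×k}`. -/
theorem nuclearNorm_eq_min_factorization (m n k : ℕ)
    (L : Matrix (Fin m) (Fin n) ℝ) (hrank : L.rank ≤ k) :
    ∃ (U : Matrix (Fin m) (Fin k) ℝ) (V : Matrix (Fin n) (Fin k) ℝ),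
      U * Vᵀ = L ∧
      nuclearNorm L = (1 / 2) * (frobSq U + frobSq V) ∧
      ∀ (U' : Matrix (Fin m) (Fin k) ℝ) (V' : Matrix (Fin n) (Fin k) ℝ),
        U' * V'ᵀ = L → nuclearNorm L ≤ (1 / 2) * (frobSq U' + frobSq V') := by
  classical
  -- the embedding of the nonzero-eigenvalue indices into `Fin k`
  have hcard : Fintype.card {i // NNaux.mu L i ≠ 0} ≤ k := by
    have h1 := (Matrix.isHermitian_conjTranspose_mul_self L).rank_eq_card_non_zero_eigs
    have h2 := Matrix.rank_transpose_mul_self L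
    have h3 : Fintype.card {i // NNaux.mu L i ≠ 0}
        = Fintype.card {i // (Matrix.isHermitian_conjTranspose_mul_self L).eigenvalues i ≠ 0} :=
      Fintype.card_congr (Equiv.subtypeEquivRight fun i => Iff.rfl)
    have hconv : (Lᴴ : Matrix (Fin n) (Fin m) ℝ) = Lᵀ := by ext a b; simp
    have h4 : (Lᴴ * L).rank = (Lᵀ * L).rank := by rw [hconv]
    calc Fintype.card {i // NNaux.mu L i ≠ 0}
        = (Lᴴ * L).rank := h3.trans h1.symm
      _ = (Lᵀ * L).rank := h4
      _ = L.rank := h2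
      _ ≤ k := hrank
  obtain ⟨e⟩ : Nonempty ({i // NNaux.mu L i ≠ 0} ↪ Fin k) :=
    Function.Embedding.nonempty_of_card_le (by simpa using hcard)
  have hsigpos : ∀ i : {i // NNaux.mu L i ≠ 0}, 0 < singVals L i.1 := by
    intro i
    have h := lt_of_le_of_ne (NNaux.mu_nonneg L i.1) (Ne.symm i.2)
    exact Real.sqrt_pos.mpr h
  have hsig0 : ∀ i : Fin n, NNaux.mu L i = 0 → singVals L i = 0 := by
    intro i h
    show Real.sqrt (NNaux.mu L i) = 0
    rw [h, Real.sqrt_zero]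
  set U : Matrix (Fin m) (Fin k) ℝ :=
    fun a j => ∑ i : {i // NNaux.mu L i ≠ 0},
      if e i = j then (Real.sqrt (singVals L i.1))⁻¹ * (L *ᵥ NNaux.q L i.1) a else 0 with hUdef
  set V : Matrix (Fin n) (Fin k) ℝ :=
    fun b j => ∑ i : {i // NNaux.mu L i ≠ 0},
      if e i = j then Real.sqrt (singVals L i.1) * NNaux.q L i.1 b else 0 with hVdef
  have hsq : ∀ i : {i // NNaux.mu L i ≠ 0},
      Real.sqrt (singVals L i.1) * Real.sqrt (singVals L i.1) = singVals L i.1 :=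
    fun i => Real.mul_self_sqrt (le_of_lt (hsigpos i))
  have hsqne : ∀ i : {i // NNaux.mu L i ≠ 0}, Real.sqrt (singVals L i.1) ≠ 0 :=
    fun i => ne_of_gt (Real.sqrt_pos.mpr (hsigpos i))
  -- the factorization property
  have hUV : U * Vᵀ = L := by
    ext a b
    rw [Matrix.mul_apply]
    simp only [Matrix.transpose_apply]
    simp only [hUdef, hVdef]
    rw [NNaux.collapse e
      (fun i => (Real.sqrt (singVals L i.1))⁻¹ * (L *ᵥ NNaux.q L i.1) a)
      (fun i => Real.sqrt (singVals L i.1) * NNaux.q L i.1 b)]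
    have h1 : ∀ i : {i // NNaux.mu L i ≠ 0},
        ((Real.sqrt (singVals L i.1))⁻¹ * (L *ᵥ NNaux.q L i.1) a)
          * (Real.sqrt (singVals L i.1) * NNaux.q L i.1 b)
        = (L *ᵥ NNaux.q L i.1) a * NNaux.q L i.1 b := by
      intro i
      calc ((Real.sqrt (singVals L i.1))⁻¹ * (L *ᵥ NNaux.q L i.1) a)
            * (Real.sqrt (singVals L i.1) * NNaux.q L i.1 b)
          = ((Real.sqrt (singVals L i.1))⁻¹ * Real.sqrt (singVals L i.1))
            * ((L *ᵥ NNaux.q L i.1) a * NNaux.q L i.1 b) := by ring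
        _ = (L *ᵥ NNaux.q L i.1) a * NNaux.q L i.1 b := by
            rw [inv_mul_cancel₀ (hsqne i), one_mul]
    rw [Finset.sum_congr rfl (fun i _ => h1 i)]
    rw [NNaux.sum_subtype_ext (fun i => NNaux.mu L i ≠ 0)
      (fun i => (L *ᵥ NNaux.q L i) a * NNaux.q L i b)
      (fun i hi => by
        show (L *ᵥ NNaux.q L i) a * NNaux.q L i b = 0
        rw [NNaux.Lq_zero L (not_not.mp hi)]; simp)]
    exact NNaux.reconstruct L a b
  -- Frobenius norms of U and V
  have hU2 : frobSq U = ∑ i : {i // NNaux.mu L i ≠ 0}, singVals L i.1 := by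
    show ∑ a, ∑ j, (U a j)^2 = _
    have h1 : ∀ a, ∑ j, (U a j)^2
        = ∑ i : {i // NNaux.mu L i ≠ 0},
            ((Real.sqrt (singVals L i.1))⁻¹ * (L *ᵥ NNaux.q L i.1) a)
            * ((Real.sqrt (singVals L i.1))⁻¹ * (L *ᵥ NNaux.q L i.1) a) := by
      intro a
      simp_rw [sq, hUdef]
      exact NNaux.collapse e _ _
    rw [Finset.sum_congr rfl (fun a _ => h1 a), Finset.sum_comm]
    apply Finset.sum_congr rfl
    intro i _
    have h2 : ∑ a, ((Real.sqrt (singVals L i.1))⁻¹ * (L *ᵥ NNaux.q L i.1) a)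
          * ((Real.sqrt (singVals L i.1))⁻¹ * (L *ᵥ NNaux.q L i.1) a)
        = (Real.sqrt (singVals L i.1))⁻¹ * (Real.sqrt (singVals L i.1))⁻¹
          * ∑ a, (L *ᵥ NNaux.q L i.1) a * (L *ᵥ NNaux.q L i.1) a := by
      rw [Finset.mul_sum]
      exact Finset.sum_congr rfl fun a _ => by ring
    rw [h2, NNaux.dot_Lq, if_pos rfl, ← NNaux.sq_singVals]
    have h5 : singVals L i.1 ≠ 0 := ne_of_gt (hsigpos i)
    have h6 : (Real.sqrt (singVals L i.1))⁻¹ * (Real.sqrt (singVals L i.1))⁻¹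
        = (singVals L i.1)⁻¹ := by rw [← mul_inv, hsq i]
    rw [h6, sq, ← mul_assoc, inv_mul_cancel₀ h5, one_mul]
  have hV2 : frobSq V = ∑ i : {i // NNaux.mu L i ≠ 0}, singVals L i.1 := by
    show ∑ b, ∑ j, (V b j)^2 = _
    have h1 : ∀ b, ∑ j, (V b j)^2
        = ∑ i : {i // NNaux.mu L i ≠ 0},
            (Real.sqrt (singVals L i.1) * NNaux.q L i.1 b)
            * (Real.sqrt (singVals L i.1) * NNaux.q L i.1 b) := by
      intro b
      simp_rw [sq, hVdef]
      exact NNaux.collapse e _ _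
    rw [Finset.sum_congr rfl (fun b _ => h1 b), Finset.sum_comm]
    apply Finset.sum_congr rfl
    intro i _
    have h2 : ∑ b, (Real.sqrt (singVals L i.1) * NNaux.q L i.1 b)
          * (Real.sqrt (singVals L i.1) * NNaux.q L i.1 b)
        = Real.sqrt (singVals L i.1) * Real.sqrt (singVals L i.1)
          * ∑ b, NNaux.q L i.1 b * NNaux.q L i.1 b := by
      rw [Finset.mul_sum]
      exact Finset.sum_congr rfl fun b _ => by ring
    rw [h2, NNaux.col_orth, if_pos rfl, hsq i, mul_one]
  have hnn : nuclearNorm L = ∑ i : {i // NNaux.mu L i ≠ 0}, singVals L i.1 := by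
    rw [nuclearNorm]
    rw [NNaux.sum_subtype_ext (fun i => NNaux.mu L i ≠ 0) (singVals L)
      (fun i hi => hsig0 i (not_not.mp hi))]
  refine ⟨U, V, hUV, by rw [hnn, hU2, hV2]; ring, ?_⟩
  -- the minimality
  intro U' V' hUV'
  have hstep : ∀ i : Fin n, ∑ a, NNaux.p L i a * (L *ᵥ NNaux.q L i) a
      = ∑ c, (U'ᵀ *ᵥ NNaux.p L i) c * (V'ᵀ *ᵥ NNaux.q L i) c := by
    intro i
    have hL : L *ᵥ NNaux.q L i = U' *ᵥ (V'ᵀ *ᵥ NNaux.q L i) := by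
      rw [Matrix.mulVec_mulVec, hUV']
    calc ∑ a, NNaux.p L i a * (L *ᵥ NNaux.q L i) a
        = NNaux.p L i ⬝ᵥ (U' *ᵥ (V'ᵀ *ᵥ NNaux.q L i)) := by rw [← hL]; rfl
      _ = (NNaux.p L i ᵥ* U') ⬝ᵥ (V'ᵀ *ᵥ NNaux.q L i) := by rw [Matrix.dotProduct_mulVec]
      _ = (U'ᵀ *ᵥ NNaux.p L i) ⬝ᵥ (V'ᵀ *ᵥ NNaux.q L i) := by
            rw [← Matrix.mulVec_transpose U' (NNaux.p L i)]
      _ = ∑ c, (U'ᵀ *ᵥ NNaux.p L i) c * (V'ᵀ *ᵥ NNaux.q L i) c := rfl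
  have h1 : nuclearNorm L = ∑ i : Fin n, ∑ c, (U'ᵀ *ᵥ NNaux.p L i) c * (V'ᵀ *ᵥ NNaux.q L i) c := by
    rw [nuclearNorm]
    rw [Finset.sum_congr rfl (fun i _ => (NNaux.p_L_q L i).symm)]
    exact Finset.sum_congr rfl fun i _ => hstep i
  have h2 : ∑ i : Fin n, ∑ c, (U'ᵀ *ᵥ NNaux.p L i) c * (V'ᵀ *ᵥ NNaux.q L i) c
      ≤ (1/2) * ((∑ i : Fin n, ∑ c, ((U'ᵀ *ᵥ NNaux.p L i) c)^2)
          + (∑ i : Fin n, ∑ c, ((V'ᵀ *ᵥ NNaux.q L i) c)^2)) := by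
    have hle : ∑ i : Fin n, ∑ c, (U'ᵀ *ᵥ NNaux.p L i) c * (V'ᵀ *ᵥ NNaux.q L i) c
        ≤ ∑ i : Fin n, ∑ c, (1/2) * (((U'ᵀ *ᵥ NNaux.p L i) c)^2 + ((V'ᵀ *ᵥ NNaux.q L i) c)^2) :=
      Finset.sum_le_sum fun i _ => Finset.sum_le_sum fun c _ => by
        nlinarith [sq_nonneg ((U'ᵀ *ᵥ NNaux.p L i) c - (V'ᵀ *ᵥ NNaux.q L i) c)]
    have heq : ∑ i : Fin n, ∑ c, (1/2) * (((U'ᵀ *ᵥ NNaux.p L i) c)^2 + ((V'ᵀ *ᵥ NNaux.q L i) c)^2)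
        = (1/2) * ((∑ i : Fin n, ∑ c, ((U'ᵀ *ᵥ NNaux.p L i) c)^2)
            + (∑ i : Fin n, ∑ c, ((V'ᵀ *ᵥ NNaux.q L i) c)^2)) := by
      simp_rw [mul_add, Finset.sum_add_distrib, Finset.mul_sum]
    linarith [hle, le_of_eq heq]
  have hA : ∑ i : Fin n, ∑ c, ((U'ᵀ *ᵥ NNaux.p L i) c)^2 ≤ frobSq U' := by
    have := NNaux.A_le L U'
    have heq : ∀ (i : Fin n) (c : Fin k), (U'ᵀ *ᵥ NNaux.p L i) c = ∑ a, U' a c * NNaux.p L i a := by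
      intro i c
      simp [Matrix.mulVec, dotProduct, Matrix.transpose_apply]
    simp_rw [heq]
    exact this
  have hB : ∑ i : Fin n, ∑ c, ((V'ᵀ *ᵥ NNaux.q L i) c)^2 = frobSq V' := by
    have := NNaux.B_eq L V'
    have heq : ∀ (i : Fin n) (c : Fin k), (V'ᵀ *ᵥ NNaux.q L i) c = ∑ b, V' b c * NNaux.q L i b := by
      intro i c
      simp [Matrix.mulVec, dotProduct, Matrix.transpose_apply]
    simp_rw [heq]
    exact this
  rw [h1]
  calc ∑ i : Fin n, ∑ c, (U'ᵀ *ᵥ NNaux.p L i) c * (V'ᵀ *ᵥ NNaux.q L i) c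
      ≤ (1/2) * ((∑ i : Fin n, ∑ c, ((U'ᵀ *ᵥ NNaux.p L i) c)^2)
          + (∑ i : Fin n, ∑ c, ((V'ᵀ *ᵥ NNaux.q L i) c)^2)) := h2
    _ ≤ (1/2) * (frobSq U' + frobSq V') := by
        have := hA
        have := hB
        linarith
end

section
/- Let L ∈ ℝ^{m×n} have rank r and full singular value decomposition L = Ũ Σ Ṽᵀ with orthogonal Ũ = [U₁ U₂] ∈ ℝ^{m×m}, Ṽ = [V₁ V₂] ∈ ℝ^{n×n}, U₁ ∈ ℝ^{m×r}, V₁ ∈ ℝ^{n×r} corresponding to the nonzero singular values. Then for any D ∈ ℝ^{m×n}, the squared Frobenius distance from D to the subdifferential of the nuclear norm at L satisfies min_{X ∈ ∂‖L‖_*} ‖X − D‖_F² = ‖I_r − U₁ᵀ D V₁‖_F² + ‖U₁ᵀ D V₂‖_F² + ‖U₂ᵀ D V₁‖_F² + min_{W' ∈ ℝ^{(m−r)×(n−r)}, ‖W'‖₂ ≤ 1} ‖U₂ᵀ D V₂ − W'‖_F², and both minima are attained. -/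
open Matrix

/-- The spectral norm: the largest singular value. -/
noncomputable def specNorm {m n : ℕ} (L : Matrix (Fin m) (Fin n) ℝ) : ℝ :=
  ⨆ i, singVals L i

/-- Membership of `X` in the subdifferential of the nuclear norm at `L`. -/
def inNuclearSubdiff {m n : ℕ} (L X : Matrix (Fin m) (Fin n) ℝ) : Prop :=
  ∀ Y : Matrix (Fin m) (Fin n) ℝ,
    nuclearNorm L + Matrix.trace (Xᵀ * (Y - L)) ≤ nuclearNorm Y

namespace NucAux


/-- operator norm at most one, squared form -/
def opb {a b : ℕ} (M : Matrix (Fin a) (Fin b) ℝ) : Prop :=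
  ∀ v : Fin b → ℝ, (M *ᵥ v) ⬝ᵥ (M *ᵥ v) ≤ v ⬝ᵥ v

lemma dot_self_nonneg {k : ℕ} (v : Fin k → ℝ) : 0 ≤ v ⬝ᵥ v :=
  Finset.sum_nonneg fun i _ => mul_self_nonneg _

lemma dot_self_eq_zero {k : ℕ} {v : Fin k → ℝ} (h : v ⬝ᵥ v = 0) : v = 0 := by
  funext i
  have := (Finset.sum_eq_zero_iff_of_nonneg (fun i _ => mul_self_nonneg (v i))).mp h i
    (Finset.mem_univ i)
  simpa [mul_self_eq_zero] using this

lemma dot_cs {k : ℕ} (u v : Fin k → ℝ) :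
    u ⬝ᵥ v ≤ Real.sqrt (u ⬝ᵥ u) * Real.sqrt (v ⬝ᵥ v) := by
  have h := Finset.sum_mul_sq_le_sq_mul_sq Finset.univ u v
  have huu : u ⬝ᵥ u = ∑ i, u i ^ 2 := by simp [dotProduct, sq]
  have hvv : v ⬝ᵥ v = ∑ i, v i ^ 2 := by simp [dotProduct, sq]
  have huv : u ⬝ᵥ v = ∑ i, u i * v i := rfl
  calc u ⬝ᵥ v ≤ |u ⬝ᵥ v| := le_abs_self _
    _ = Real.sqrt ((u ⬝ᵥ v) ^ 2) := by rw [Real.sqrt_sq_eq_abs]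
    _ ≤ Real.sqrt ((u ⬝ᵥ u) * (v ⬝ᵥ v)) := by
        apply Real.sqrt_le_sqrt; rw [huu, hvv, huv]; exact h
    _ = Real.sqrt (u ⬝ᵥ u) * Real.sqrt (v ⬝ᵥ v) := Real.sqrt_mul (dot_self_nonneg u) _

lemma mulVec_dot_eq {a b : ℕ} (M : Matrix (Fin a) (Fin b) ℝ) (v : Fin b → ℝ) (w : Fin a → ℝ) :
    (M *ᵥ v) ⬝ᵥ w = v ⬝ᵥ (Mᵀ *ᵥ w) := by
  simp only [dotProduct, mulVec, dotProduct, transpose_apply, Finset.sum_mul, Finset.mul_sum]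
  rw [Finset.sum_comm]
  apply Finset.sum_congr rfl; intro i _; apply Finset.sum_congr rfl; intro j _; ring

lemma dot_mulVec_eq {a b : ℕ} (M : Matrix (Fin a) (Fin b) ℝ) (w : Fin a → ℝ) (v : Fin b → ℝ) :
    w ⬝ᵥ (M *ᵥ v) = (Mᵀ *ᵥ w) ⬝ᵥ v := by
  rw [dotProduct_comm, mulVec_dot_eq, dotProduct_comm]

/-- real spectral theorem, matrix form -/
lemma spectral_real {k : ℕ} {A : Matrix (Fin k) (Fin k) ℝ} (hA : A.IsHermitian) :
    ∃ P : Matrix (Fin k) (Fin k) ℝ, Pᵀ * P = 1 ∧ P * Pᵀ = 1 ∧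
      A = P * diagonal hA.eigenvalues * Pᵀ := by
  refine ⟨(hA.eigenvectorUnitary : Matrix (Fin k) (Fin k) ℝ), ?_, ?_, ?_⟩
  · have := (Matrix.mem_unitaryGroup_iff').mp (hA.eigenvectorUnitary).2
    simpa [star_eq_conjTranspose, conjTranspose_eq_transpose_of_trivial] using this
  · have := (Matrix.mem_unitaryGroup_iff).mp (hA.eigenvectorUnitary).2
    simpa [star_eq_conjTranspose, conjTranspose_eq_transpose_of_trivial] using this
  · have := hA.spectral_theorem
    simpa [star_eq_conjTranspose, conjTranspose_eq_transpose_of_trivial,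
      RCLike.ofReal_real_eq_id] using this


/-- column of a matrix -/
def mcol {a b : ℕ} (M : Matrix (Fin a) (Fin b) ℝ) (i : Fin b) : Fin a → ℝ := fun k => M k i

lemma mulVec_mcol {a b c : ℕ} (M : Matrix (Fin a) (Fin b) ℝ) (N : Matrix (Fin b) (Fin c) ℝ)
    (i : Fin c) : M *ᵥ mcol N i = mcol (M * N) i := by
  funext k; simp [mcol, mulVec, dotProduct, mul_apply]

lemma mcol_dot_mcol {a b c : ℕ} (M : Matrix (Fin a) (Fin b) ℝ) (N : Matrix (Fin a) (Fin c) ℝ)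
    (i : Fin b) (j : Fin c) : mcol M i ⬝ᵥ mcol N j = (Mᵀ * N) i j := by
  simp [mcol, dotProduct, mul_apply]

lemma entry_eq {a b c d : ℕ} (U : Matrix (Fin a) (Fin c) ℝ) (X : Matrix (Fin a) (Fin b) ℝ)
    (V : Matrix (Fin b) (Fin d) ℝ) (i : Fin c) (j : Fin d) :
    (Uᵀ * X * V) i j = mcol U i ⬝ᵥ (X *ᵥ mcol V j) := by
  rw [mulVec_mcol, mcol_dot_mcol, Matrix.mul_assoc]

lemma trace_transpose_mul_eq {a b : ℕ} (A B : Matrix (Fin a) (Fin b) ℝ) :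
    trace (Aᵀ * B) = ∑ i, ∑ j, A i j * B i j := by
  rw [Finset.sum_comm]
  simp [trace, diag, mul_apply]

lemma frobSq_eq_trace {a b : ℕ} (A : Matrix (Fin a) (Fin b) ℝ) :
    frobSq A = trace (Aᵀ * A) := by
  rw [trace_transpose_mul_eq]; simp [frobSq, sq]

lemma mulVec_self_dot {a b : ℕ} (X : Matrix (Fin a) (Fin b) ℝ) (v : Fin b → ℝ) :
    (X *ᵥ v) ⬝ᵥ (X *ᵥ v) = v ⬝ᵥ ((Xᵀ * X) *ᵥ v) := by
  rw [mulVec_dot_eq, ← mulVec_mulVec]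

lemma conj_diag {k a : ℕ} (P : Matrix (Fin k) (Fin k) ℝ) (hPt : Pᵀ * P = 1)
    (Y : Matrix (Fin a) (Fin k) ℝ) (d : Fin k → ℝ)
    (hY : Yᵀ * Y = P * diagonal d * Pᵀ) : Pᵀ * (Yᵀ * Y) * P = diagonal d := by
  rw [hY]
  calc Pᵀ * (P * diagonal d * Pᵀ) * P = (Pᵀ * P) * diagonal d * (Pᵀ * P) := by
        simp only [Matrix.mul_assoc]
    _ = diagonal d := by rw [hPt]; simp

lemma rayleigh_le {k : ℕ} (P : Matrix (Fin k) (Fin k) ℝ) (hPP : P * Pᵀ = 1)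
    (e : Fin k → ℝ) (he : ∀ i, e i ≤ 1) (v : Fin k → ℝ) :
    v ⬝ᵥ ((P * diagonal e * Pᵀ) *ᵥ v) ≤ v ⬝ᵥ v := by
  have h1 : (P * diagonal e * Pᵀ) *ᵥ v = P *ᵥ (diagonal e *ᵥ (Pᵀ *ᵥ v)) := by
    simp [← mulVec_mulVec]
  rw [h1, dot_mulVec_eq]
  set w := Pᵀ *ᵥ v with hw
  have h2 : w ⬝ᵥ (diagonal e *ᵥ w) ≤ w ⬝ᵥ w := by
    apply Finset.sum_le_sum
    intro i _
    rw [mulVec_diagonal]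
    calc w i * (e i * w i) = e i * (w i * w i) := by ring
      _ ≤ 1 * (w i * w i) := mul_le_mul_of_nonneg_right (he i) (mul_self_nonneg _)
      _ = w i * w i := one_mul _
  refine h2.trans_eq ?_
  rw [hw, ← dot_mulVec_eq, mulVec_mulVec, hPP, one_mulVec]


lemma eigs_nonneg {a b : ℕ} (Y : Matrix (Fin a) (Fin b) ℝ) (i : Fin b) :
    0 ≤ (Matrix.isHermitian_conjTranspose_mul_self Y).eigenvalues i :=
  (Matrix.posSemidef_conjTranspose_mul_self Y).eigenvalues_nonneg i

/-- trace against columns of an orthogonal matrix -/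
lemma trace_cols {a b : ℕ} (X Y : Matrix (Fin a) (Fin b) ℝ)
    (P : Matrix (Fin b) (Fin b) ℝ) (hPP : P * Pᵀ = 1) :
    trace (Xᵀ * Y) = ∑ i, (X *ᵥ mcol P i) ⬝ᵥ (Y *ᵥ mcol P i) := by
  have h1 : trace (Pᵀ * (Xᵀ * Y) * P) = trace (Xᵀ * Y) := by
    rw [trace_mul_cycle, hPP, Matrix.one_mul]
  rw [← h1]
  have h2 : ∀ i, (Pᵀ * (Xᵀ * Y) * P) i i = (X *ᵥ mcol P i) ⬝ᵥ (Y *ᵥ mcol P i) := by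
    intro i
    rw [entry_eq, ← mulVec_mulVec, ← mulVec_dot_eq]
  simp only [trace, diag]
  exact Finset.sum_congr rfl fun i _ => h2 i

lemma dual_le {a b : ℕ} (X Y : Matrix (Fin a) (Fin b) ℝ) (hX : opb X) :
    trace (Xᵀ * Y) ≤ nuclearNorm Y := by
  obtain ⟨P, hPt, hPP, hspec⟩ := spectral_real (Matrix.isHermitian_conjTranspose_mul_self Y)
  set lam := (Matrix.isHermitian_conjTranspose_mul_self Y).eigenvalues with hlam
  have hspec' : Yᵀ * Y = P * diagonal lam * Pᵀ := by
    rw [← Matrix.conjTranspose_eq_transpose_of_trivial]; exact hspec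
  have hD : Pᵀ * (Yᵀ * Y) * P = diagonal lam := conj_diag P hPt Y lam hspec'
  rw [trace_cols X Y P hPP]
  apply Finset.sum_le_sum
  intro i _
  have hunit : mcol P i ⬝ᵥ mcol P i = 1 := by
    rw [mcol_dot_mcol, hPt]; simp [Matrix.one_apply]
  have hYv : (Y *ᵥ mcol P i) ⬝ᵥ (Y *ᵥ mcol P i) = lam i := by
    rw [mulVec_self_dot, ← entry_eq, hD, diagonal_apply_eq]
  have hXv : (X *ᵥ mcol P i) ⬝ᵥ (X *ᵥ mcol P i) ≤ 1 := (hX _).trans_eq hunit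
  calc (X *ᵥ mcol P i) ⬝ᵥ (Y *ᵥ mcol P i)
      ≤ Real.sqrt ((X *ᵥ mcol P i) ⬝ᵥ (X *ᵥ mcol P i)) *
        Real.sqrt ((Y *ᵥ mcol P i) ⬝ᵥ (Y *ᵥ mcol P i)) := dot_cs _ _
    _ ≤ 1 * Real.sqrt (lam i) := by
        rw [hYv]
        apply mul_le_mul_of_nonneg_right _ (Real.sqrt_nonneg _)
        calc Real.sqrt ((X *ᵥ mcol P i) ⬝ᵥ (X *ᵥ mcol P i)) ≤ Real.sqrt 1 :=
              Real.sqrt_le_sqrt hXv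
          _ = 1 := Real.sqrt_one
    _ = singVals Y i := by rw [one_mul]; rfl

lemma dual_attain {a b : ℕ} (Y : Matrix (Fin a) (Fin b) ℝ) :
    ∃ X : Matrix (Fin a) (Fin b) ℝ, opb X ∧ trace (Xᵀ * Y) = nuclearNorm Y := by
  obtain ⟨P, hPt, hPP, hspec⟩ := spectral_real (Matrix.isHermitian_conjTranspose_mul_self Y)
  set lam := (Matrix.isHermitian_conjTranspose_mul_self Y).eigenvalues with hlam
  have hspec' : Yᵀ * Y = P * diagonal lam * Pᵀ := by
    rw [← Matrix.conjTranspose_eq_transpose_of_trivial]; exact hspec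
  have hD : Pᵀ * (Yᵀ * Y) * P = diagonal lam := conj_diag P hPt Y lam hspec'
  set c : Fin b → ℝ := fun i => if 0 < lam i then (Real.sqrt (lam i))⁻¹ else 0 with hc
  have key : diagonal c * diagonal lam * diagonal c
      = diagonal (fun i => c i * lam i * c i) := by
    rw [diagonal_mul_diagonal, diagonal_mul_diagonal]
  refine ⟨Y * P * diagonal c * Pᵀ, ?_, ?_⟩
  · intro v
    have hXt : (Y * P * diagonal c * Pᵀ)ᵀ * (Y * P * diagonal c * Pᵀ)
        = P * diagonal (fun i => c i * lam i * c i) * Pᵀ := by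
      calc (Y * P * diagonal c * Pᵀ)ᵀ * (Y * P * diagonal c * Pᵀ)
          = P * (diagonal c * (Pᵀ * (Yᵀ * Y) * P) * diagonal c) * Pᵀ := by
            simp only [Matrix.transpose_mul, Matrix.transpose_transpose,
              Matrix.diagonal_transpose, ← Matrix.mul_assoc]
        _ = P * (diagonal c * diagonal lam * diagonal c) * Pᵀ := by rw [hD]
        _ = P * diagonal (fun i => c i * lam i * c i) * Pᵀ := by rw [key]
    rw [mulVec_self_dot, hXt]
    apply rayleigh_le P hPP
    intro i
    by_cases h : 0 < lam i
    · have hs : Real.sqrt (lam i) * Real.sqrt (lam i) = lam i :=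
        Real.mul_self_sqrt (le_of_lt h)
      have hne : Real.sqrt (lam i) ≠ 0 := ne_of_gt (Real.sqrt_pos.mpr h)
      have h1 : (Real.sqrt (lam i))⁻¹ * lam i * (Real.sqrt (lam i))⁻¹ = 1 := by
        rw [mul_comm _ (lam i), mul_assoc, ← mul_inv, hs, mul_inv_cancel₀ (ne_of_gt h)]
      simp only [hc, if_pos h, h1, le_refl]
    · simp [hc, if_neg h]
  · have h1 : trace ((Y * P * diagonal c * Pᵀ)ᵀ * Y)
        = trace (diagonal c * diagonal lam) := by
      calc trace ((Y * P * diagonal c * Pᵀ)ᵀ * Y)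
          = trace (P * (diagonal c * (Pᵀ * (Yᵀ * Y)))) := by
            simp only [Matrix.transpose_mul, Matrix.transpose_transpose,
              Matrix.diagonal_transpose, ← Matrix.mul_assoc]
        _ = trace ((diagonal c * (Pᵀ * (Yᵀ * Y))) * P) := trace_mul_comm _ _
        _ = trace (diagonal c * (Pᵀ * (Yᵀ * Y) * P)) := by
            simp only [← Matrix.mul_assoc]
        _ = trace (diagonal c * diagonal lam) := by rw [hD]
    rw [h1, diagonal_mul_diagonal, trace_diagonal]
    apply Finset.sum_congr rfl
    intro i _
    show c i * lam i = singVals Y i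
    by_cases h : 0 < lam i
    · have hs : Real.sqrt (lam i) * Real.sqrt (lam i) = lam i :=
        Real.mul_self_sqrt (le_of_lt h)
      have hspos : 0 < Real.sqrt (lam i) := Real.sqrt_pos.mpr h
      simp only [hc, if_pos h]
      show (Real.sqrt (lam i))⁻¹ * lam i = Real.sqrt (lam i)
      rw [eq_comm, eq_inv_mul_iff_mul_eq₀ (ne_of_gt hspos), hs]
    · have h0 : lam i = 0 := le_antisymm (not_lt.mp h) (eigs_nonneg Y i)
      show c i * lam i = Real.sqrt (lam i)
      simp [hc, if_neg h, h0]

lemma specNorm_le_one_iff {a b : ℕ} (M : Matrix (Fin a) (Fin b) ℝ) :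
    specNorm M ≤ 1 ↔ opb M := by
  obtain ⟨P, hPt, hPP, hspec⟩ := spectral_real (Matrix.isHermitian_conjTranspose_mul_self M)
  set lam := (Matrix.isHermitian_conjTranspose_mul_self M).eigenvalues with hlam
  have hspec' : Mᵀ * M = P * diagonal lam * Pᵀ := by
    rw [← Matrix.conjTranspose_eq_transpose_of_trivial]; exact hspec
  have hD : Pᵀ * (Mᵀ * M) * P = diagonal lam := conj_diag P hPt M lam hspec'
  constructor
  · intro h v
    have hle : ∀ i, lam i ≤ 1 := by
      intro i
      have h1 : singVals M i ≤ specNorm M := by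
        apply le_ciSup (f := fun i => singVals M i)
        exact Finite.bddAbove_range _
      have h2 : Real.sqrt (lam i) ≤ 1 := le_trans h1 h
      calc lam i = Real.sqrt (lam i) ^ 2 := (Real.sq_sqrt (eigs_nonneg M i)).symm
        _ ≤ 1 ^ 2 := by apply pow_le_pow_left₀ (Real.sqrt_nonneg _) h2
        _ = 1 := one_pow 2
    rw [mulVec_self_dot, hspec']
    exact rayleigh_le P hPP lam hle v
  · intro h
    rcases isEmpty_or_nonempty (Fin b) with hb | hb
    · have : (Set.range fun i => singVals M i) = ∅ := Set.range_eq_empty _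
      rw [specNorm, iSup, this, Real.sSup_empty]; norm_num
    · apply ciSup_le
      intro i
      show Real.sqrt (lam i) ≤ 1
      rw [show (1 : ℝ) = Real.sqrt 1 from Real.sqrt_one.symm]
      apply Real.sqrt_le_sqrt
      have hunit : mcol P i ⬝ᵥ mcol P i = 1 := by
        rw [mcol_dot_mcol, hPt]; simp [Matrix.one_apply]
      have hMv : (M *ᵥ mcol P i) ⬝ᵥ (M *ᵥ mcol P i) = lam i := by
        rw [mulVec_self_dot, ← entry_eq, hD, diagonal_apply_eq]
      rw [← hMv]
      exact (h _).trans_eq hunit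


section SVD

variable {m n r s t : ℕ}
  (U₁ : Matrix (Fin m) (Fin r) ℝ) (U₂ : Matrix (Fin m) (Fin s) ℝ)
  (V₁ : Matrix (Fin n) (Fin r) ℝ) (V₂ : Matrix (Fin n) (Fin t) ℝ)

/-- general-index trace of Aᵀ * B as entrywise sum -/
lemma trace_transpose_mul_eq' {α β : Type*} [Fintype α] [Fintype β]
    (A B : Matrix α β ℝ) : trace (Aᵀ * B) = ∑ i, ∑ j, A i j * B i j := by
  rw [Finset.sum_comm]
  simp [trace, diag, mul_apply]

lemma ortho_blocks₁ (hUo₁ : (fromCols U₁ U₂)ᵀ * (fromCols U₁ U₂) = 1) :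
    U₁ᵀ * U₁ = 1 ∧ U₁ᵀ * U₂ = 0 ∧ U₂ᵀ * U₁ = 0 ∧ U₂ᵀ * U₂ = 1 := by
  rw [transpose_fromCols, fromRows_mul_fromCols, ← fromBlocks_one] at hUo₁
  have h := fromBlocks_inj.mp hUo₁
  exact ⟨h.1, h.2.1, h.2.2.1, h.2.2.2⟩

lemma ortho_sum (hUo₂ : (fromCols U₁ U₂) * (fromCols U₁ U₂)ᵀ = 1) :
    U₁ * U₁ᵀ + U₂ * U₂ᵀ = 1 := by
  rw [transpose_fromCols, fromCols_mul_fromRows] at hUo₂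
  exact hUo₂

/-- trace decomposition against the SVD -/
lemma trace_decomp (σ : Fin r → ℝ)
    (L : Matrix (Fin m) (Fin n) ℝ)
    (hSVD : L = (fromCols U₁ U₂)
        * (fromBlocks (Matrix.diagonal σ) 0 0 0 : Matrix (Fin r ⊕ Fin s) (Fin r ⊕ Fin t) ℝ)
        * (fromCols V₁ V₂)ᵀ)
    (X : Matrix (Fin m) (Fin n) ℝ) :
    trace (Xᵀ * L) = ∑ i, σ i * (mcol U₁ i ⬝ᵥ (X *ᵥ mcol V₁ i)) := by
  set Ut := fromCols U₁ U₂
  set Vt := fromCols V₁ V₂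
  set Sb : Matrix (Fin r ⊕ Fin s) (Fin r ⊕ Fin t) ℝ := fromBlocks (Matrix.diagonal σ) 0 0 0
  have hG : Utᵀ * X * Vt
      = fromBlocks (U₁ᵀ * X * V₁) (U₁ᵀ * X * V₂) (U₂ᵀ * X * V₁) (U₂ᵀ * X * V₂) := by
    show (fromCols U₁ U₂)ᵀ * X * (fromCols V₁ V₂) = _
    rw [transpose_fromCols, fromRows_mul, fromRows_mul_fromCols]
  have h1 : trace (Xᵀ * L) = trace ((Utᵀ * X * Vt)ᵀ * Sb) := by
    rw [hSVD]
    have e1 : Xᵀ * (Ut * Sb * Vtᵀ) = (Xᵀ * Ut * Sb) * Vtᵀ := by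
      simp only [← Matrix.mul_assoc]
    rw [e1, trace_mul_comm]
    have e2 : Vtᵀ * (Xᵀ * Ut * Sb) = (Vtᵀ * Xᵀ * Ut) * Sb := by
      simp only [← Matrix.mul_assoc]
    rw [e2]
    congr 1
    simp only [Matrix.transpose_mul, Matrix.transpose_transpose, ← Matrix.mul_assoc]
  rw [h1, trace_transpose_mul_eq', hG]
  rw [Fintype.sum_sum_type]
  have h2 : (∑ i : Fin s, ∑ j : Fin r ⊕ Fin t,
      (fromBlocks (U₁ᵀ * X * V₁) (U₁ᵀ * X * V₂) (U₂ᵀ * X * V₁) (U₂ᵀ * X * V₂)) (Sum.inr i) j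
        * Sb (Sum.inr i) j) = 0 := by
    apply Finset.sum_eq_zero
    intro i _
    apply Finset.sum_eq_zero
    intro j _
    rcases j with j | j <;> simp [Sb]
  rw [h2, add_zero]
  apply Finset.sum_congr rfl
  intro i _
  rw [Fintype.sum_sum_type]
  have h3 : (∑ j : Fin t,
      (fromBlocks (U₁ᵀ * X * V₁) (U₁ᵀ * X * V₂) (U₂ᵀ * X * V₁) (U₂ᵀ * X * V₂)) (Sum.inl i)
        (Sum.inr j) * Sb (Sum.inl i) (Sum.inr j)) = 0 := by
    apply Finset.sum_eq_zero
    intro j _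
    simp [Sb]
  rw [h3, add_zero]
  have h4 : ∀ j : Fin r,
      (fromBlocks (U₁ᵀ * X * V₁) (U₁ᵀ * X * V₂) (U₂ᵀ * X * V₁) (U₂ᵀ * X * V₂)) (Sum.inl i)
        (Sum.inl j) * Sb (Sum.inl i) (Sum.inl j)
      = if i = j then (U₁ᵀ * X * V₁) i j * σ i else 0 := by
    intro j
    simp only [fromBlocks_apply₁₁, Sb, diagonal_apply, mul_ite, mul_zero]
  rw [Finset.sum_congr rfl fun j _ => h4 j, Finset.sum_ite_eq Finset.univ i
    (fun j => (U₁ᵀ * X * V₁) i j * σ i)]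
  simp only [Finset.mem_univ, if_true]
  rw [entry_eq]
  ring

lemma opb_zero {a b : ℕ} : opb (0 : Matrix (Fin a) (Fin b) ℝ) := by
  intro v
  rw [Matrix.zero_mulVec]
  simpa using dot_self_nonneg v

/-- operator norm bound for `U₁ * V₁ᵀ + U₂ * W * V₂ᵀ` -/
lemma opb_assembled
    (hUo₁ : (fromCols U₁ U₂)ᵀ * (fromCols U₁ U₂) = 1)
    (hVo₂ : (fromCols V₁ V₂) * (fromCols V₁ V₂)ᵀ = 1)
    (W : Matrix (Fin s) (Fin t) ℝ) (hW : opb W) :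
    opb (U₁ * V₁ᵀ + U₂ * W * V₂ᵀ) := by
  obtain ⟨hU11, hU12, hU21, hU22⟩ := ortho_blocks₁ U₁ U₂ hUo₁
  have hVsum : V₁ * V₁ᵀ + V₂ * V₂ᵀ = 1 := ortho_sum V₁ V₂ hVo₂
  intro v
  set a := V₁ᵀ *ᵥ v with ha
  set c := W *ᵥ (V₂ᵀ *ᵥ v) with hc
  have hq : (U₁ * V₁ᵀ + U₂ * W * V₂ᵀ) *ᵥ v = U₁ *ᵥ a + U₂ *ᵥ c := by
    rw [Matrix.add_mulVec]
    congr 1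
    · rw [← mulVec_mulVec]
    · rw [← mulVec_mulVec, ← mulVec_mulVec]
  rw [hq]
  have cross : ∀ (x : Fin r → ℝ) (y : Fin s → ℝ), (U₁ *ᵥ x) ⬝ᵥ (U₂ *ᵥ y) = 0 := by
    intro x y
    rw [mulVec_dot_eq, mulVec_mulVec, hU12]
    simp [Matrix.zero_mulVec]
  have hU1 : ∀ x : Fin r → ℝ, (U₁ *ᵥ x) ⬝ᵥ (U₁ *ᵥ x) = x ⬝ᵥ x := by
    intro x
    rw [mulVec_dot_eq, mulVec_mulVec, hU11, one_mulVec]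
  have hU2 : ∀ y : Fin s → ℝ, (U₂ *ᵥ y) ⬝ᵥ (U₂ *ᵥ y) = y ⬝ᵥ y := by
    intro y
    rw [mulVec_dot_eq, mulVec_mulVec, hU22, one_mulVec]
  have expand : (U₁ *ᵥ a + U₂ *ᵥ c) ⬝ᵥ (U₁ *ᵥ a + U₂ *ᵥ c) = a ⬝ᵥ a + c ⬝ᵥ c := by
    rw [add_dotProduct, dotProduct_add, dotProduct_add, hU1, hU2, cross]
    have : (U₂ *ᵥ c) ⬝ᵥ (U₁ *ᵥ a) = 0 := by rw [dotProduct_comm]; exact cross a c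
    rw [this]
    ring
  rw [expand]
  have hc2 : c ⬝ᵥ c ≤ (V₂ᵀ *ᵥ v) ⬝ᵥ (V₂ᵀ *ᵥ v) := hW _
  have final : a ⬝ᵥ a + (V₂ᵀ *ᵥ v) ⬝ᵥ (V₂ᵀ *ᵥ v) = v ⬝ᵥ v := by
    rw [ha]
    rw [mulVec_dot_eq, mulVec_dot_eq, mulVec_mulVec, mulVec_mulVec]
    rw [Matrix.transpose_transpose, Matrix.transpose_transpose]
    rw [← dotProduct_add, ← Matrix.add_mulVec, hVsum, one_mulVec]
  linarith [hc2]

lemma mcol_unit {a b : ℕ} (U : Matrix (Fin a) (Fin b) ℝ) (hU : Uᵀ * U = 1) (i : Fin b) :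
    mcol U i ⬝ᵥ mcol U i = 1 := by
  rw [mcol_dot_mcol, hU]
  simp [Matrix.one_apply]

/-- the nuclear norm of an SVD-presented matrix is the sum of the (positive) diagonal -/
lemma nuclear_svd (σ : Fin r → ℝ) (hσ : ∀ i, 0 < σ i)
    (L : Matrix (Fin m) (Fin n) ℝ)
    (hUo₁ : (fromCols U₁ U₂)ᵀ * (fromCols U₁ U₂) = 1)
    (hVo₁ : (fromCols V₁ V₂)ᵀ * (fromCols V₁ V₂) = 1)
    (hVo₂ : (fromCols V₁ V₂) * (fromCols V₁ V₂)ᵀ = 1)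
    (hSVD : L = (fromCols U₁ U₂)
        * (fromBlocks (Matrix.diagonal σ) 0 0 0 : Matrix (Fin r ⊕ Fin s) (Fin r ⊕ Fin t) ℝ)
        * (fromCols V₁ V₂)ᵀ) :
    nuclearNorm L = ∑ i, σ i := by
  obtain ⟨hU11, hU12, hU21, hU22⟩ := ortho_blocks₁ U₁ U₂ hUo₁
  obtain ⟨hV11, hV12, hV21, hV22⟩ := ortho_blocks₁ V₁ V₂ hVo₁
  apply le_antisymm
  · obtain ⟨X₀, hX₀, hX₀L⟩ := dual_attain L
    rw [← hX₀L, trace_decomp U₁ U₂ V₁ V₂ σ L hSVD X₀]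
    apply Finset.sum_le_sum
    intro i _
    have hb : mcol U₁ i ⬝ᵥ (X₀ *ᵥ mcol V₁ i) ≤ 1 := by
      calc mcol U₁ i ⬝ᵥ (X₀ *ᵥ mcol V₁ i)
          ≤ Real.sqrt (mcol U₁ i ⬝ᵥ mcol U₁ i) *
            Real.sqrt ((X₀ *ᵥ mcol V₁ i) ⬝ᵥ (X₀ *ᵥ mcol V₁ i)) := dot_cs _ _
        _ ≤ 1 * 1 := by
            apply mul_le_mul
            · rw [mcol_unit U₁ hU11 i, Real.sqrt_one]
            · calc Real.sqrt ((X₀ *ᵥ mcol V₁ i) ⬝ᵥ (X₀ *ᵥ mcol V₁ i))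
                  ≤ Real.sqrt (mcol V₁ i ⬝ᵥ mcol V₁ i) := Real.sqrt_le_sqrt (hX₀ _)
                _ = 1 := by rw [mcol_unit V₁ hV11 i, Real.sqrt_one]
            · exact Real.sqrt_nonneg _
            · norm_num
        _ = 1 := mul_one 1
    calc σ i * (mcol U₁ i ⬝ᵥ (X₀ *ᵥ mcol V₁ i)) ≤ σ i * 1 :=
          mul_le_mul_of_nonneg_left hb (le_of_lt (hσ i))
      _ = σ i := mul_one _
  · have hX₁ : opb (U₁ * V₁ᵀ + U₂ * (0 : Matrix (Fin s) (Fin t) ℝ) * V₂ᵀ) :=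
      opb_assembled U₁ U₂ V₁ V₂ hUo₁ hVo₂ 0 opb_zero
    have hX₁' : (U₁ * V₁ᵀ + U₂ * (0 : Matrix (Fin s) (Fin t) ℝ) * V₂ᵀ) = U₁ * V₁ᵀ := by
      simp
    rw [hX₁'] at hX₁
    have htr := trace_decomp U₁ U₂ V₁ V₂ σ L hSVD (U₁ * V₁ᵀ)
    have hv : ∀ i, (U₁ * V₁ᵀ) *ᵥ mcol V₁ i = mcol U₁ i := by
      intro i
      rw [mulVec_mcol]
      have : U₁ * V₁ᵀ * V₁ = U₁ := by
        rw [Matrix.mul_assoc, hV11, Matrix.mul_one]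
      rw [this]
    have htr' : trace ((U₁ * V₁ᵀ)ᵀ * L) = ∑ i, σ i := by
      rw [htr]
      apply Finset.sum_congr rfl
      intro i _
      rw [hv i, mcol_unit U₁ hU11 i, mul_one]
    calc ∑ i, σ i = trace ((U₁ * V₁ᵀ)ᵀ * L) := htr'.symm
      _ ≤ nuclearNorm L := dual_le _ L hX₁

end SVD

lemma nuclearNorm_zero {a b : ℕ} : nuclearNorm (0 : Matrix (Fin a) (Fin b) ℝ) = 0 := by
  obtain ⟨P, hPt, hPP, hspec⟩ :=
    spectral_real (Matrix.isHermitian_conjTranspose_mul_self (0 : Matrix (Fin a) (Fin b) ℝ))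
  set lam := (Matrix.isHermitian_conjTranspose_mul_self (0 : Matrix (Fin a) (Fin b) ℝ)).eigenvalues
    with hlam
  have hspec' : (0 : Matrix (Fin a) (Fin b) ℝ)ᵀ * (0 : Matrix (Fin a) (Fin b) ℝ)
      = P * diagonal lam * Pᵀ := by
    rw [← Matrix.conjTranspose_eq_transpose_of_trivial]; exact hspec
  have hD := conj_diag P hPt (0 : Matrix (Fin a) (Fin b) ℝ) lam hspec'
  have hD0 : diagonal lam = 0 := by
    rw [← hD]; simp
  have hlam0 : ∀ i, lam i = 0 := by
    intro i
    have := congrFun (congrFun hD0 i) i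
    simpa [diagonal_apply_eq] using this
  unfold nuclearNorm singVals
  rw [← hlam]
  simp [hlam0]

/-- the nuclear norm of a unit rank-one matrix is 1 -/
lemma nuclear_rank_one {a b : ℕ} (u : Fin a → ℝ) (v : Fin b → ℝ)
    (hu : u ⬝ᵥ u = 1) (hv : v ⬝ᵥ v = 1) :
    nuclearNorm (vecMulVec u v) = 1 := by
  set Y := vecMulVec u v with hY
  obtain ⟨P, hPt, hPP, hspec⟩ := spectral_real (Matrix.isHermitian_conjTranspose_mul_self Y)
  set lam := (Matrix.isHermitian_conjTranspose_mul_self Y).eigenvalues with hlam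
  have hspec' : Yᵀ * Y = P * diagonal lam * Pᵀ := by
    rw [← Matrix.conjTranspose_eq_transpose_of_trivial]; exact hspec
  have hD := conj_diag P hPt Y lam hspec'
  have hYtY : Yᵀ * Y = vecMulVec v v := by
    funext i j
    simp only [mul_apply, transpose_apply, hY, vecMulVec_apply]
    calc ∑ k, u k * v i * (u k * v j) = (∑ k, u k * u k) * (v i * v j) := by
          rw [Finset.sum_mul]
          apply Finset.sum_congr rfl
          intro k _
          ring
      _ = v i * v j := by
          have h' : (∑ k : Fin a, u k * u k) = 1 := hu
          rw [h']; ring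
  have hBB : (Yᵀ * Y) * (Yᵀ * Y) = Yᵀ * Y := by
    rw [hYtY]
    funext i j
    simp only [mul_apply, vecMulVec_apply]
    calc ∑ k, v i * v k * (v k * v j) = (∑ k, v k * v k) * (v i * v j) := by
          rw [Finset.sum_mul]
          apply Finset.sum_congr rfl
          intro k _
          ring
      _ = v i * v j := by
          have h' : (∑ k : Fin b, v k * v k) = 1 := hv
          rw [h']; ring
  have hDD : diagonal lam * diagonal lam = diagonal lam := by
    rw [← hD]
    calc (Pᵀ * (Yᵀ * Y) * P) * (Pᵀ * (Yᵀ * Y) * P)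
        = Pᵀ * ((Yᵀ * Y) * (P * Pᵀ) * (Yᵀ * Y)) * P := by
          simp only [← Matrix.mul_assoc]
      _ = Pᵀ * ((Yᵀ * Y) * (Yᵀ * Y)) * P := by rw [hPP]; simp only [Matrix.mul_one]
      _ = Pᵀ * (Yᵀ * Y) * P := by rw [hBB]
  have hlam01 : ∀ i, lam i = 0 ∨ lam i = 1 := by
    intro i
    have h1 : lam i * lam i = lam i := by
      have := congrFun (congrFun hDD i) i
      rw [diagonal_mul_diagonal] at this
      simpa [diagonal_apply_eq] using this
    have h2 : lam i * (lam i - 1) = 0 := by rw [mul_sub, h1]; ring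
    rcases mul_eq_zero.mp h2 with h | h
    · exact Or.inl h
    · exact Or.inr (by linarith [h])
  have hsum : ∑ i, lam i = 1 := by
    have h1 : trace (diagonal lam) = trace (Yᵀ * Y) := by
      rw [← hD, trace_mul_cycle, ← Matrix.mul_assoc, hPP, Matrix.one_mul]
    rw [trace_diagonal] at h1
    rw [h1, hYtY]
    simp only [trace, diag, vecMulVec_apply]
    exact hv
  unfold nuclearNorm singVals
  rw [← hlam, ← hsum]
  apply Finset.sum_congr rfl
  intro i _
  rcases hlam01 i with h | h <;> simp [h]

/-- opb from the bilinear bound -/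
lemma opb_of_bilinear {a b : ℕ} (M : Matrix (Fin a) (Fin b) ℝ)
    (h : ∀ (u : Fin a → ℝ) (v : Fin b → ℝ), u ⬝ᵥ u = 1 → v ⬝ᵥ v = 1 → u ⬝ᵥ (M *ᵥ v) ≤ 1) :
    ∀ (u : Fin a → ℝ) (v : Fin b → ℝ),
      u ⬝ᵥ (M *ᵥ v) ≤ Real.sqrt (u ⬝ᵥ u) * Real.sqrt (v ⬝ᵥ v) := by
  intro u v
  by_cases hu : u ⬝ᵥ u = 0
  · have : u = 0 := by
      funext i
      have := (Finset.sum_eq_zero_iff_of_nonneg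
        (fun i _ => mul_self_nonneg (u i))).mp hu i (Finset.mem_univ i)
      simpa [mul_self_eq_zero] using this
    rw [this]
    simp [Real.sqrt_nonneg, mul_nonneg, dot_self_nonneg]
  by_cases hv : v ⬝ᵥ v = 0
  · have : v = 0 := by
      funext i
      have := (Finset.sum_eq_zero_iff_of_nonneg
        (fun i _ => mul_self_nonneg (v i))).mp hv i (Finset.mem_univ i)
      simpa [mul_self_eq_zero] using this
    rw [this]
    simp [Real.sqrt_nonneg, mul_nonneg, dot_self_nonneg]
  have hupos : 0 < u ⬝ᵥ u := lt_of_le_of_ne (dot_self_nonneg u) (Ne.symm hu)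
  have hvpos : 0 < v ⬝ᵥ v := lt_of_le_of_ne (dot_self_nonneg v) (Ne.symm hv)
  set cu := Real.sqrt (u ⬝ᵥ u) with hcu
  set cv := Real.sqrt (v ⬝ᵥ v) with hcv
  have hcupos : 0 < cu := Real.sqrt_pos.mpr hupos
  have hcvpos : 0 < cv := Real.sqrt_pos.mpr hvpos
  have hcu2 : cu * cu = u ⬝ᵥ u := Real.mul_self_sqrt (le_of_lt hupos)
  have hcv2 : cv * cv = v ⬝ᵥ v := Real.mul_self_sqrt (le_of_lt hvpos)
  have key := h (cu⁻¹ • u) (cv⁻¹ • v) ?_ ?_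
  · have hexp : (cu⁻¹ • u) ⬝ᵥ (M *ᵥ (cv⁻¹ • v)) = cu⁻¹ * cv⁻¹ * (u ⬝ᵥ (M *ᵥ v)) := by
      rw [Matrix.mulVec_smul, smul_dotProduct, dotProduct_smul]
      simp [smul_eq_mul]
      ring
    rw [hexp] at key
    have := mul_le_mul_of_nonneg_left key (le_of_lt (mul_pos hcupos hcvpos))
    calc u ⬝ᵥ (M *ᵥ v) = (cu * cv) * (cu⁻¹ * cv⁻¹ * (u ⬝ᵥ (M *ᵥ v))) := by
          field_simp
        _ ≤ (cu * cv) * 1 := this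
        _ = cu * cv := mul_one _
  · rw [smul_dotProduct, dotProduct_smul, smul_eq_mul, smul_eq_mul, ← mul_assoc]
    rw [show cu⁻¹ * cu⁻¹ = (cu * cu)⁻¹ by rw [mul_inv]]
    rw [hcu2, inv_mul_cancel₀ hu]
  · rw [smul_dotProduct, dotProduct_smul, smul_eq_mul, smul_eq_mul, ← mul_assoc]
    rw [show cv⁻¹ * cv⁻¹ = (cv * cv)⁻¹ by rw [mul_inv]]
    rw [hcv2, inv_mul_cancel₀ hv]

lemma opb_of_bilinear' {a b : ℕ} (M : Matrix (Fin a) (Fin b) ℝ)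
    (h : ∀ (u : Fin a → ℝ) (v : Fin b → ℝ),
      u ⬝ᵥ (M *ᵥ v) ≤ Real.sqrt (u ⬝ᵥ u) * Real.sqrt (v ⬝ᵥ v)) : opb M := by
  intro v
  set w := M *ᵥ v with hw
  by_cases h0 : w ⬝ᵥ w = 0
  · rw [h0]; exact dot_self_nonneg v
  have hwpos : 0 < w ⬝ᵥ w := lt_of_le_of_ne (dot_self_nonneg w) (Ne.symm h0)
  have key := h w v
  have hsq : Real.sqrt (w ⬝ᵥ w) * Real.sqrt (w ⬝ᵥ w) = w ⬝ᵥ w :=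
    Real.mul_self_sqrt (le_of_lt hwpos)
  have hspos : 0 < Real.sqrt (w ⬝ᵥ w) := Real.sqrt_pos.mpr hwpos
  have h1 : Real.sqrt (w ⬝ᵥ w) * Real.sqrt (w ⬝ᵥ w) ≤ Real.sqrt (w ⬝ᵥ w) * Real.sqrt (v ⬝ᵥ v) := by
    rw [hsq]; exact key
  have h2 : Real.sqrt (w ⬝ᵥ w) ≤ Real.sqrt (v ⬝ᵥ v) :=
    le_of_mul_le_mul_left (by rw [mul_comm (Real.sqrt (w ⬝ᵥ w))] at h1; exact h1) hspos
  calc w ⬝ᵥ w = Real.sqrt (w ⬝ᵥ w) * Real.sqrt (w ⬝ᵥ w) := hsq.symm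
    _ ≤ Real.sqrt (v ⬝ᵥ v) * Real.sqrt (v ⬝ᵥ v) :=
        mul_le_mul h2 h2 (Real.sqrt_nonneg _) (Real.sqrt_nonneg _)
    _ = v ⬝ᵥ v := Real.mul_self_sqrt (dot_self_nonneg v)

lemma frob_fromBlocks {p q p' q' : ℕ} (B11 : Matrix (Fin p) (Fin q) ℝ)
    (B12 : Matrix (Fin p) (Fin q') ℝ) (B21 : Matrix (Fin p') (Fin q) ℝ)
    (B22 : Matrix (Fin p') (Fin q') ℝ) :
    (∑ i : Fin p ⊕ Fin p', ∑ j : Fin q ⊕ Fin q',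
      fromBlocks B11 B12 B21 B22 i j * fromBlocks B11 B12 B21 B22 i j)
    = frobSq B11 + frobSq B12 + frobSq B21 + frobSq B22 := by
  rw [Fintype.sum_sum_type]
  simp only [Fintype.sum_sum_type, fromBlocks_apply₁₁, fromBlocks_apply₁₂,
    fromBlocks_apply₂₁, fromBlocks_apply₂₂, Finset.sum_add_distrib]
  simp only [frobSq, sq]
  ring

section SVD2

variable {m n r s t : ℕ}
  (U₁ : Matrix (Fin m) (Fin r) ℝ) (U₂ : Matrix (Fin m) (Fin s) ℝ)
  (V₁ : Matrix (Fin n) (Fin r) ℝ) (V₂ : Matrix (Fin n) (Fin t) ℝ)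

lemma frob_decomp
    (hUo₂ : (fromCols U₁ U₂) * (fromCols U₁ U₂)ᵀ = 1)
    (hVo₂ : (fromCols V₁ V₂) * (fromCols V₁ V₂)ᵀ = 1)
    (M : Matrix (Fin m) (Fin n) ℝ) :
    frobSq M = frobSq (U₁ᵀ * M * V₁) + frobSq (U₁ᵀ * M * V₂)
      + frobSq (U₂ᵀ * M * V₁) + frobSq (U₂ᵀ * M * V₂) := by
  set Ut := fromCols U₁ U₂ with hUt
  set Vt := fromCols V₁ V₂ with hVt
  have hG : Utᵀ * M * Vt
      = fromBlocks (U₁ᵀ * M * V₁) (U₁ᵀ * M * V₂) (U₂ᵀ * M * V₁) (U₂ᵀ * M * V₂) := by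
    rw [hUt, hVt, transpose_fromCols, fromRows_mul, fromRows_mul_fromCols]
  have h1 : trace (Mᵀ * M) = trace ((Utᵀ * M * Vt)ᵀ * (Utᵀ * M * Vt)) := by
    have e : (Utᵀ * M * Vt)ᵀ * (Utᵀ * M * Vt) = Vtᵀ * (Mᵀ * (Ut * Utᵀ) * M) * Vt := by
      simp only [Matrix.transpose_mul, Matrix.transpose_transpose, ← Matrix.mul_assoc]
    rw [e, hUo₂, Matrix.mul_one]
    rw [trace_mul_cycle, ← Matrix.mul_assoc]
    rw [show Vt * Vtᵀ * Mᵀ * M = (Vt * Vtᵀ) * (Mᵀ * M) from by simp only [Matrix.mul_assoc]]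
    rw [hVo₂, Matrix.one_mul]
  rw [frobSq_eq_trace, h1, trace_transpose_mul_eq', hG, frob_fromBlocks]

end SVD2

lemma exists_min_proj {s t : ℕ} (A : Matrix (Fin s) (Fin t) ℝ) :
    ∃ W : Matrix (Fin s) (Fin t) ℝ, opb W ∧
      ∀ W' : Matrix (Fin s) (Fin t) ℝ, opb W' → frobSq (A - W) ≤ frobSq (A - W') := by
  set K : Set (Matrix (Fin s) (Fin t) ℝ) := {W | opb W} with hK
  have hKne : K.Nonempty := ⟨0, opb_zero⟩
  have hKclosed : IsClosed K := by
    have hKeq : K = ⋂ v : Fin t → ℝ, {W : Matrix (Fin s) (Fin t) ℝ |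
        (W *ᵥ v) ⬝ᵥ (W *ᵥ v) ≤ v ⬝ᵥ v} := by
      ext W
      simp [hK, opb, Set.mem_iInter]
    rw [hKeq]
    apply isClosed_iInter
    intro v
    apply isClosed_le _ continuous_const
    exact Continuous.dotProduct (continuous_id.matrix_mulVec continuous_const)
      (continuous_id.matrix_mulVec continuous_const)
  have hsub : K ⊆ Set.univ.pi (fun _ : Fin s => Set.univ.pi fun _ : Fin t =>
      Set.Icc (-1 : ℝ) 1) := by
    intro W hW
    apply Set.mem_univ_pi.mpr
    intro i
    rw [Set.mem_univ_pi]
    intro j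
    have h1 := hW (Pi.single j 1)
    have h2 : (Pi.single j 1 : Fin t → ℝ) ⬝ᵥ Pi.single j 1 = 1 := by
      rw [dotProduct_single]
      simp
    have h3 : (W *ᵥ Pi.single j 1) ⬝ᵥ (W *ᵥ Pi.single j 1) = ∑ k, W k j * W k j := by
      rw [Matrix.mulVec_single]
      simp [dotProduct]
    have h4 : W i j * W i j ≤ 1 := by
      have h5 : W i j * W i j ≤ ∑ k, W k j * W k j :=
        Finset.single_le_sum (fun k _ => mul_self_nonneg (W k j)) (Finset.mem_univ i)
      rw [h3, h2] at h1
      linarith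
    constructor
    · nlinarith [h4]
    · nlinarith [h4]
  have hbox : IsCompact (Set.univ.pi (fun _ : Fin s => Set.univ.pi fun _ : Fin t =>
      Set.Icc (-1 : ℝ) 1)) :=
    isCompact_univ_pi fun _ => isCompact_univ_pi fun _ => isCompact_Icc
  have hKcomp : IsCompact K := hbox.of_isClosed_subset hKclosed hsub
  have hcont : Continuous fun W : Matrix (Fin s) (Fin t) ℝ => frobSq (A - W) := by
    unfold frobSq
    apply continuous_finset_sum
    intro i _
    apply continuous_finset_sum
    intro j _
    have hw : Continuous fun W : Matrix (Fin s) (Fin t) ℝ => W i j :=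
      (continuous_apply j).comp (continuous_apply i)
    have : Continuous fun W : Matrix (Fin s) (Fin t) ℝ => (A i j - W i j) ^ 2 :=
      (continuous_const.sub hw).pow 2
    simpa [Matrix.sub_apply] using this
  obtain ⟨W, hWK, hmin⟩ := hKcomp.exists_isMinOn hKne hcont.continuousOn
  exact ⟨W, hWK, fun W' hW' => hmin hW'⟩


lemma trace_vecMulVec {a b : ℕ} (X : Matrix (Fin a) (Fin b) ℝ) (u : Fin a → ℝ)
    (v : Fin b → ℝ) : trace (Xᵀ * vecMulVec u v) = u ⬝ᵥ (X *ᵥ v) := by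
  simp only [trace, diag, mul_apply, transpose_apply, vecMulVec_apply, dotProduct,
    mulVec, Finset.mul_sum]
  rw [Finset.sum_comm]
  apply Finset.sum_congr rfl
  intro i _
  apply Finset.sum_congr rfl
  intro j _
  ring

lemma frobSq_sub_comm {a b : ℕ} (A B : Matrix (Fin a) (Fin b) ℝ) :
    frobSq (A - B) = frobSq (B - A) := by
  unfold frobSq
  apply Finset.sum_congr rfl
  intro i _
  apply Finset.sum_congr rfl
  intro j _
  rw [Matrix.sub_apply, Matrix.sub_apply]
  ring

lemma frobSq_zero_sub {a b : ℕ} (A : Matrix (Fin a) (Fin b) ℝ) :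
    frobSq (0 - A) = frobSq A := by
  unfold frobSq
  apply Finset.sum_congr rfl
  intro i _
  apply Finset.sum_congr rfl
  intro j _
  rw [Matrix.sub_apply, Matrix.zero_apply]
  ring


end NucAux

open NucAux in
/-- With `L = Ũ Σ Ṽᵀ` a full SVD (`Ũ = [U₁ U₂]`, `Ṽ = [V₁ V₂]` orthogonal, `r` strictly
positive singular values), the squared Frobenius distance from any `D` to `∂‖L‖_*` equals
`‖I − U₁ᵀDV₁‖_F² + ‖U₁ᵀDV₂‖_F² + ‖U₂ᵀDV₁‖_F² + min_{‖W'‖₂≤1} ‖U₂ᵀDV₂ − W'‖_F²`,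
with both minima attained. -/
theorem dist_to_nuclearNorm_subdifferential (m n r s t : ℕ)
    (hm : m = r + s) (hn : n = r + t)
    (L : Matrix (Fin m) (Fin n) ℝ) (hrank : L.rank = r)
    (U₁ : Matrix (Fin m) (Fin r) ℝ) (U₂ : Matrix (Fin m) (Fin s) ℝ)
    (V₁ : Matrix (Fin n) (Fin r) ℝ) (V₂ : Matrix (Fin n) (Fin t) ℝ)
    (σ : Fin r → ℝ) (hσ : ∀ i, 0 < σ i)
    (hUo₁ : (fromCols U₁ U₂)ᵀ * (fromCols U₁ U₂) = 1)
    (hUo₂ : (fromCols U₁ U₂) * (fromCols U₁ U₂)ᵀ = 1)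
    (hVo₁ : (fromCols V₁ V₂)ᵀ * (fromCols V₁ V₂) = 1)
    (hVo₂ : (fromCols V₁ V₂) * (fromCols V₁ V₂)ᵀ = 1)
    (hSVD : L = (fromCols U₁ U₂)
        * (fromBlocks (Matrix.diagonal σ) 0 0 0 : Matrix (Fin r ⊕ Fin s) (Fin r ⊕ Fin t) ℝ)
        * (fromCols V₁ V₂)ᵀ)
    (D : Matrix (Fin m) (Fin n) ℝ) :
    ∃ X : Matrix (Fin m) (Fin n) ℝ, inNuclearSubdiff L X ∧
      (∀ X' : Matrix (Fin m) (Fin n) ℝ, inNuclearSubdiff L X' →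
        frobSq (X - D) ≤ frobSq (X' - D)) ∧
      ∃ W' : Matrix (Fin s) (Fin t) ℝ, specNorm W' ≤ 1 ∧
        (∀ W'' : Matrix (Fin s) (Fin t) ℝ, specNorm W'' ≤ 1 →
          frobSq (U₂ᵀ * D * V₂ - W') ≤ frobSq (U₂ᵀ * D * V₂ - W'')) ∧
        frobSq (X - D) =
          frobSq ((1 : Matrix (Fin r) (Fin r) ℝ) - U₁ᵀ * D * V₁)
            + frobSq (U₁ᵀ * D * V₂) + frobSq (U₂ᵀ * D * V₁)
            + frobSq (U₂ᵀ * D * V₂ - W') := by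
  obtain ⟨hU11, hU12, hU21, hU22⟩ := ortho_blocks₁ U₁ U₂ hUo₁
  obtain ⟨hV11, hV12, hV21, hV22⟩ := ortho_blocks₁ V₁ V₂ hVo₁
  have hnuc : nuclearNorm L = ∑ i, σ i := nuclear_svd U₁ U₂ V₁ V₂ σ hσ L hUo₁ hVo₁ hVo₂ hSVD
  obtain ⟨W', hW'opb, hW'min⟩ := exists_min_proj (U₂ᵀ * D * V₂)
  set X := U₁ * V₁ᵀ + U₂ * W' * V₂ᵀ with hX
  -- blocks of X
  have hXB11 : U₁ᵀ * X * V₁ = 1 := by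
    rw [hX]
    simp only [Matrix.mul_add, Matrix.add_mul]
    have e1 : U₁ᵀ * (U₁ * V₁ᵀ) * V₁ = (U₁ᵀ * U₁) * (V₁ᵀ * V₁) := by
      simp only [← Matrix.mul_assoc]
    have e2 : U₁ᵀ * (U₂ * W' * V₂ᵀ) * V₁ = (U₁ᵀ * U₂) * W' * (V₂ᵀ * V₁) := by
      simp only [← Matrix.mul_assoc]
    rw [e1, e2, hU11, hU12, hV11]
    simp
  have hXB12 : U₁ᵀ * X * V₂ = 0 := by
    rw [hX]
    simp only [Matrix.mul_add, Matrix.add_mul]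
    have e1 : U₁ᵀ * (U₁ * V₁ᵀ) * V₂ = (U₁ᵀ * U₁) * (V₁ᵀ * V₂) := by
      simp only [← Matrix.mul_assoc]
    have e2 : U₁ᵀ * (U₂ * W' * V₂ᵀ) * V₂ = (U₁ᵀ * U₂) * W' * (V₂ᵀ * V₂) := by
      simp only [← Matrix.mul_assoc]
    rw [e1, e2, hU12, hV12]
    simp
  have hXB21 : U₂ᵀ * X * V₁ = 0 := by
    rw [hX]
    simp only [Matrix.mul_add, Matrix.add_mul]
    have e1 : U₂ᵀ * (U₁ * V₁ᵀ) * V₁ = (U₂ᵀ * U₁) * (V₁ᵀ * V₁) := by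
      simp only [← Matrix.mul_assoc]
    have e2 : U₂ᵀ * (U₂ * W' * V₂ᵀ) * V₁ = (U₂ᵀ * U₂) * W' * (V₂ᵀ * V₁) := by
      simp only [← Matrix.mul_assoc]
    rw [e1, e2, hU21, hV21]
    simp
  have hXB22 : U₂ᵀ * X * V₂ = W' := by
    rw [hX]
    simp only [Matrix.mul_add, Matrix.add_mul]
    have e1 : U₂ᵀ * (U₁ * V₁ᵀ) * V₂ = (U₂ᵀ * U₁) * (V₁ᵀ * V₂) := by
      simp only [← Matrix.mul_assoc]
    have e2 : U₂ᵀ * (U₂ * W' * V₂ᵀ) * V₂ = (U₂ᵀ * U₂) * W' * (V₂ᵀ * V₂) := by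
      simp only [← Matrix.mul_assoc]
    rw [e1, e2, hU21, hU22, hV22]
    simp
  -- membership of X in the subdifferential
  have hXopb : opb X := opb_assembled U₁ U₂ V₁ V₂ hUo₁ hVo₂ W' hW'opb
  have hXtrace : trace (Xᵀ * L) = ∑ i, σ i := by
    rw [trace_decomp U₁ U₂ V₁ V₂ σ L hSVD X]
    apply Finset.sum_congr rfl
    intro i _
    have hXV₁ : X * V₁ = U₁ := by
      rw [hX, Matrix.add_mul]
      have e1 : U₁ * V₁ᵀ * V₁ = U₁ * (V₁ᵀ * V₁) := by simp only [Matrix.mul_assoc]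
      have e2 : U₂ * W' * V₂ᵀ * V₁ = U₂ * W' * (V₂ᵀ * V₁) := by simp only [Matrix.mul_assoc]
      rw [e1, e2, hV11, hV21]
      simp
    rw [mulVec_mcol, hXV₁, mcol_unit U₁ hU11 i, mul_one]
  have hXmem : inNuclearSubdiff L X := by
    intro Y
    have h1 : trace (Xᵀ * (Y - L)) = trace (Xᵀ * Y) - trace (Xᵀ * L) := by
      rw [Matrix.mul_sub, trace_sub]
    have h2 : trace (Xᵀ * Y) ≤ nuclearNorm Y := dual_le X Y hXopb
    rw [h1, hXtrace, hnuc]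
    linarith
  -- analysis of an arbitrary element of the subdifferential
  have hXanalysis : ∀ X' : Matrix (Fin m) (Fin n) ℝ, inNuclearSubdiff L X' →
      U₁ᵀ * X' * V₁ = 1 ∧ U₁ᵀ * X' * V₂ = 0 ∧ U₂ᵀ * X' * V₁ = 0 ∧ opb (U₂ᵀ * X' * V₂) := by
    intro X' hX'
    -- the trace against L is exactly the nuclear norm
    have htr_ge : nuclearNorm L ≤ trace (X'ᵀ * L) := by
      have h0 := hX' 0
      rw [nuclearNorm_zero, zero_sub, Matrix.mul_neg, trace_neg] at h0
      linarith
    have h2L : (2 : ℝ) • L = (fromCols U₁ U₂)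
        * (fromBlocks (Matrix.diagonal fun i => 2 * σ i) 0 0 0
          : Matrix (Fin r ⊕ Fin s) (Fin r ⊕ Fin t) ℝ)
        * (fromCols V₁ V₂)ᵀ := by
      rw [hSVD]
      have e1 : (fromBlocks (Matrix.diagonal fun i => 2 * σ i) 0 0 0
          : Matrix (Fin r ⊕ Fin s) (Fin r ⊕ Fin t) ℝ)
          = (2 : ℝ) • (fromBlocks (Matrix.diagonal σ) 0 0 0
            : Matrix (Fin r ⊕ Fin s) (Fin r ⊕ Fin t) ℝ) := by
        rw [fromBlocks_smul]
        congr 1 <;> try simp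
        rw [← Matrix.diagonal_smul]
        congr 1
      rw [e1, Matrix.mul_smul, Matrix.smul_mul]
    have hnuc2 : nuclearNorm ((2 : ℝ) • L) = 2 * ∑ i, σ i := by
      rw [nuclear_svd U₁ U₂ V₁ V₂ (fun i => 2 * σ i)
        (fun i => by show (0:ℝ) < 2 * σ i; have := hσ i; linarith) ((2:ℝ) • L) hUo₁ hVo₁ hVo₂ h2L]
      rw [Finset.mul_sum]
    have htr_le : trace (X'ᵀ * L) ≤ nuclearNorm L := by
      have h2 := hX' ((2 : ℝ) • L)
      have e2 : (2 : ℝ) • L - L = L := by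
        rw [two_smul]; abel
      rw [e2, hnuc2, hnuc] at h2
      linarith
    have htrL : trace (X'ᵀ * L) = ∑ i, σ i := by
      rw [← hnuc]; exact le_antisymm htr_le htr_ge
    -- trace bound against arbitrary Y
    have htr_any : ∀ Y : Matrix (Fin m) (Fin n) ℝ, trace (X'ᵀ * Y) ≤ nuclearNorm Y := by
      intro Y
      have h1 := hX' Y
      rw [Matrix.mul_sub, trace_sub] at h1
      have : trace (X'ᵀ * L) = nuclearNorm L := by rw [htrL, hnuc]
      linarith
    have hle1 : ∀ (u : Fin m → ℝ) (v : Fin n → ℝ), u ⬝ᵥ u = 1 → v ⬝ᵥ v = 1 →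
        u ⬝ᵥ (X' *ᵥ v) ≤ 1 := by
      intro u v hu hv
      have := htr_any (vecMulVec u v)
      rw [trace_vecMulVec, nuclear_rank_one u v hu hv] at this
      exact this
    have hbil := opb_of_bilinear X' hle1
    have hopb := opb_of_bilinear' X' hbil
    have hbilT : ∀ (u : Fin n → ℝ) (v : Fin m → ℝ),
        u ⬝ᵥ (X'ᵀ *ᵥ v) ≤ Real.sqrt (u ⬝ᵥ u) * Real.sqrt (v ⬝ᵥ v) := by
      intro u v
      have e : u ⬝ᵥ (X'ᵀ *ᵥ v) = v ⬝ᵥ (X' *ᵥ u) := by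
        rw [dot_mulVec_eq, transpose_transpose, dotProduct_comm]
      rw [e, mul_comm]
      exact hbil v u
    have hopbT : opb (X'ᵀ) := opb_of_bilinear' X'ᵀ hbilT
    -- the diagonal entries are all 1
    have ht1 : ∀ i, mcol U₁ i ⬝ᵥ (X' *ᵥ mcol V₁ i) = 1 := by
      have hsum : ∑ i, σ i * (mcol U₁ i ⬝ᵥ (X' *ᵥ mcol V₁ i)) = ∑ i, σ i := by
        rw [← trace_decomp U₁ U₂ V₁ V₂ σ L hSVD X', htrL]
      have hle : ∀ i, mcol U₁ i ⬝ᵥ (X' *ᵥ mcol V₁ i) ≤ 1 := by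
        intro i
        calc mcol U₁ i ⬝ᵥ (X' *ᵥ mcol V₁ i)
            ≤ Real.sqrt (mcol U₁ i ⬝ᵥ mcol U₁ i) * Real.sqrt (mcol V₁ i ⬝ᵥ mcol V₁ i) :=
              hbil _ _
          _ = 1 := by rw [mcol_unit U₁ hU11 i, mcol_unit V₁ hV11 i, Real.sqrt_one, mul_one]
      have hzero : ∑ i, σ i * (1 - mcol U₁ i ⬝ᵥ (X' *ᵥ mcol V₁ i)) = 0 := by
        simp only [mul_sub, mul_one]
        rw [Finset.sum_sub_distrib, hsum, sub_self]
      have hnn : ∀ i ∈ Finset.univ, 0 ≤ σ i * (1 - mcol U₁ i ⬝ᵥ (X' *ᵥ mcol V₁ i)) := by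
        intro i _
        apply mul_nonneg (le_of_lt (hσ i))
        linarith [hle i]
      intro i
      have hterm := (Finset.sum_eq_zero_iff_of_nonneg hnn).mp hzero i (Finset.mem_univ i)
      rcases mul_eq_zero.mp hterm with h | h
      · exact absurd h (ne_of_gt (hσ i))
      · linarith
    -- the columns behave as for the SVD factors
    have hXv : ∀ i, X' *ᵥ mcol V₁ i = mcol U₁ i := by
      intro i
      have hw1 : (X' *ᵥ mcol V₁ i) ⬝ᵥ (X' *ᵥ mcol V₁ i) ≤ 1 :=
        (hopb _).trans_eq (mcol_unit V₁ hV11 i)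
      have hw2 : mcol U₁ i ⬝ᵥ (X' *ᵥ mcol V₁ i) = 1 := ht1 i
      have hdiff : ((X' *ᵥ mcol V₁ i) - mcol U₁ i) ⬝ᵥ ((X' *ᵥ mcol V₁ i) - mcol U₁ i)
          = (X' *ᵥ mcol V₁ i) ⬝ᵥ (X' *ᵥ mcol V₁ i)
            - 2 * (mcol U₁ i ⬝ᵥ (X' *ᵥ mcol V₁ i)) + mcol U₁ i ⬝ᵥ mcol U₁ i := by
        rw [sub_dotProduct, dotProduct_sub, dotProduct_sub,
          dotProduct_comm (X' *ᵥ mcol V₁ i) (mcol U₁ i)]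
        ring
      have h0 : ((X' *ᵥ mcol V₁ i) - mcol U₁ i) ⬝ᵥ ((X' *ᵥ mcol V₁ i) - mcol U₁ i) = 0 := by
        apply le_antisymm _ (dot_self_nonneg _)
        rw [hdiff, mcol_unit U₁ hU11 i, hw2]
        linarith
      have := dot_self_eq_zero h0
      exact sub_eq_zero.mp this
    have hXtu : ∀ i, X'ᵀ *ᵥ mcol U₁ i = mcol V₁ i := by
      intro i
      have hw1 : (X'ᵀ *ᵥ mcol U₁ i) ⬝ᵥ (X'ᵀ *ᵥ mcol U₁ i) ≤ 1 :=
        (hopbT _).trans_eq (mcol_unit U₁ hU11 i)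
      have hw2 : mcol V₁ i ⬝ᵥ (X'ᵀ *ᵥ mcol U₁ i) = 1 := by
        have e : mcol V₁ i ⬝ᵥ (X'ᵀ *ᵥ mcol U₁ i) = (X' *ᵥ mcol V₁ i) ⬝ᵥ mcol U₁ i := by
          rw [dot_mulVec_eq, transpose_transpose]
        rw [e, dotProduct_comm]
        exact ht1 i
      have hdiff : ((X'ᵀ *ᵥ mcol U₁ i) - mcol V₁ i) ⬝ᵥ ((X'ᵀ *ᵥ mcol U₁ i) - mcol V₁ i)
          = (X'ᵀ *ᵥ mcol U₁ i) ⬝ᵥ (X'ᵀ *ᵥ mcol U₁ i)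
            - 2 * (mcol V₁ i ⬝ᵥ (X'ᵀ *ᵥ mcol U₁ i)) + mcol V₁ i ⬝ᵥ mcol V₁ i := by
        rw [sub_dotProduct, dotProduct_sub, dotProduct_sub,
          dotProduct_comm (X'ᵀ *ᵥ mcol U₁ i) (mcol V₁ i)]
        ring
      have h0 : ((X'ᵀ *ᵥ mcol U₁ i) - mcol V₁ i) ⬝ᵥ ((X'ᵀ *ᵥ mcol U₁ i) - mcol V₁ i) = 0 := by
        apply le_antisymm _ (dot_self_nonneg _)
        rw [hdiff, mcol_unit V₁ hV11 i, hw2]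
        linarith
      exact sub_eq_zero.mp (dot_self_eq_zero h0)
    -- the blocks of X'
    have hB11 : U₁ᵀ * X' * V₁ = 1 := by
      ext i j
      rw [entry_eq, hXv j, mcol_dot_mcol, hU11]
    have hB12 : U₁ᵀ * X' * V₂ = 0 := by
      ext i j
      rw [entry_eq]
      have e : mcol U₁ i ⬝ᵥ (X' *ᵥ mcol V₂ j) = (X'ᵀ *ᵥ mcol U₁ i) ⬝ᵥ mcol V₂ j :=
        dot_mulVec_eq X' _ _
      rw [e, hXtu i, mcol_dot_mcol, hV12]
    have hB21 : U₂ᵀ * X' * V₁ = 0 := by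
      ext i j
      rw [entry_eq, hXv j, mcol_dot_mcol, hU21]
    have hB22opb : opb (U₂ᵀ * X' * V₂) := by
      intro b
      have hmv : (U₂ᵀ * X' * V₂) *ᵥ b = U₂ᵀ *ᵥ (X' *ᵥ (V₂ *ᵥ b)) := by
        rw [← mulVec_mulVec, ← mulVec_mulVec]
      have hU2w : ∀ w : Fin m → ℝ, (U₂ᵀ *ᵥ w) ⬝ᵥ (U₂ᵀ *ᵥ w) ≤ w ⬝ᵥ w := by
        intro w
        have e1 : (U₂ᵀ *ᵥ w) ⬝ᵥ (U₂ᵀ *ᵥ w) = w ⬝ᵥ ((U₂ * U₂ᵀ) *ᵥ w) := by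
          rw [mulVec_dot_eq, transpose_transpose, mulVec_mulVec]
        have hsub : U₂ * U₂ᵀ = 1 - U₁ * U₁ᵀ :=
          eq_sub_of_add_eq' (ortho_sum U₁ U₂ hUo₂)
        rw [e1, hsub, Matrix.sub_mulVec, dotProduct_sub, Matrix.one_mulVec]
        have e2 : w ⬝ᵥ ((U₁ * U₁ᵀ) *ᵥ w) = (U₁ᵀ *ᵥ w) ⬝ᵥ (U₁ᵀ *ᵥ w) := by
          rw [← mulVec_mulVec, dot_mulVec_eq]
        rw [e2]
        linarith [dot_self_nonneg (U₁ᵀ *ᵥ w)]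
      rw [hmv]
      calc (U₂ᵀ *ᵥ (X' *ᵥ (V₂ *ᵥ b))) ⬝ᵥ (U₂ᵀ *ᵥ (X' *ᵥ (V₂ *ᵥ b)))
          ≤ (X' *ᵥ (V₂ *ᵥ b)) ⬝ᵥ (X' *ᵥ (V₂ *ᵥ b)) := hU2w _
        _ ≤ (V₂ *ᵥ b) ⬝ᵥ (V₂ *ᵥ b) := hopb _
        _ = b ⬝ᵥ b := by rw [mulVec_dot_eq, mulVec_mulVec, hV22, one_mulVec]
    exact ⟨hB11, hB12, hB21, hB22opb⟩
  -- the block decomposition of the distance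
  have hblock : ∀ (Z : Matrix (Fin m) (Fin n) ℝ) (W : Matrix (Fin s) (Fin t) ℝ),
      U₁ᵀ * Z * V₁ = 1 → U₁ᵀ * Z * V₂ = 0 → U₂ᵀ * Z * V₁ = 0 → U₂ᵀ * Z * V₂ = W →
      frobSq (Z - D) = frobSq ((1 : Matrix (Fin r) (Fin r) ℝ) - U₁ᵀ * D * V₁)
        + frobSq (U₁ᵀ * D * V₂) + frobSq (U₂ᵀ * D * V₁) + frobSq (U₂ᵀ * D * V₂ - W) := by
    intro Z W h1 h2 h3 h4
    rw [frob_decomp U₁ U₂ V₁ V₂ hUo₂ hVo₂ (Z - D)]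
    have e1 : U₁ᵀ * (Z - D) * V₁ = 1 - U₁ᵀ * D * V₁ := by
      rw [Matrix.mul_sub, Matrix.sub_mul, h1]
    have e2 : U₁ᵀ * (Z - D) * V₂ = 0 - U₁ᵀ * D * V₂ := by
      rw [Matrix.mul_sub, Matrix.sub_mul, h2]
    have e3 : U₂ᵀ * (Z - D) * V₁ = 0 - U₂ᵀ * D * V₁ := by
      rw [Matrix.mul_sub, Matrix.sub_mul, h3]
    have e4 : U₂ᵀ * (Z - D) * V₂ = W - U₂ᵀ * D * V₂ := by
      rw [Matrix.mul_sub, Matrix.sub_mul, h4]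
    rw [e1, e2, e3, e4, frobSq_zero_sub, frobSq_zero_sub, frobSq_sub_comm W]
  refine ⟨X, hXmem, ?_, ?_⟩
  · intro X' hX'
    obtain ⟨hB11, hB12, hB21, hBopb⟩ := hXanalysis X' hX'
    rw [hblock X W' hXB11 hXB12 hXB21 hXB22,
      hblock X' (U₂ᵀ * X' * V₂) hB11 hB12 hB21 rfl]
    have := hW'min (U₂ᵀ * X' * V₂) hBopb
    linarith
  · refine ⟨W', (specNorm_le_one_iff W').mpr hW'opb, ?_, ?_⟩
    · intro W'' hW''
      exact hW'min W'' ((specNorm_le_one_iff W'').mp hW'')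
    · exact hblock X W' hXB11 hXB12 hXB21 hXB22
end
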